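/- arXiv:1609.06274 — 4 statements merged into one kernel-verified Lean document; each statement's English description precedes it below -/
import Mathlib

section
/- Let G be a finite graph (loops allowed) with edge ideal I = I(G) ⊆ R. For a vertex v of G, the ideal I(G) admits a separation at the variable x_v if and only if v is a separating vertex of G. -/
open MvPolynomial

noncomputable section

/-- The edge ideal of the (possibly non-simple) graph on `V` given by the
symmetric relation `E`: the ideal generated by the monomials `X a * X b`
over all pairs `(a, b)` with `E a b`. -/
def edgeIdeal (k : Type*) [Field k] {V : Type*} (E : V → V → Prop) :
    Ideal (MvPolynomial V k) :=
  Ideal.span {m | ∃ a b, E a b ∧ m = X a * X b}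

/-- The generator `X u * X v` of the edge ideal, as an element of the ideal. -/
def edgeGen (k : Type*) [Field k] {V : Type*} (E : V → V → Prop) (u v : V) (h : E u v) :
    edgeIdeal k E :=
  ⟨X u * X v, Ideal.subset_span ⟨u, v, h, rfl⟩⟩

/-- `φ : I → R/I` is a trivial first-order deformation: it lies in the image of `δ*`,
i.e. it is induced by a `k`-derivation of `R`. -/
def IsTrivialDef (k : Type*) [Field k] {V : Type*} (E : V → V → Prop)
    (φ : edgeIdeal k E →ₗ[MvPolynomial V k] MvPolynomial V k ⧸ edgeIdeal k E) : Prop :=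
  ∃ d : Derivation k (MvPolynomial V k) (MvPolynomial V k),
    ∀ f : edgeIdeal k E, φ f = Ideal.Quotient.mk (edgeIdeal k E) (d f)

/-- `R/I(G)` is rigid: `δ*` is surjective, i.e. `T¹(R/I) = 0`. -/
def RigidEdgeIdeal (k : Type*) [Field k] {V : Type*} (E : V → V → Prop) : Prop :=
  ∀ φ : edgeIdeal k E →ₗ[MvPolynomial V k] MvPolynomial V k ⧸ edgeIdeal k E,
    IsTrivialDef k E φ

open scoped Classical in
/-- The neighborhood of a vertex. -/
def nbhd {V : Type*} [Fintype V] (E : V → V → Prop) (v : V) : Finset V :=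
  Finset.univ.filter (fun w => E v w)

open scoped Classical in
/-- The set `Λ_{ab}` of squarefree monomials `√(∏_{g ∈ Λ} x_{c g})` over all choice
functions `c` with `c g ∈ Λ_g = N(g) \ {a,b}` for every `g ∈ Λ = (N(a)\{b}) ∪ (N(b)\{a})`. -/
def LambdaSet (k : Type*) [Field k] {V : Type*} [Fintype V] [DecidableEq V]
    (E : V → V → Prop) (a b : V) : Set (MvPolynomial V k) :=
  {m | ∃ c : V → V,
    (∀ g ∈ (nbhd E a).erase b ∪ (nbhd E b).erase a, c g ∈ nbhd E g \ {a, b}) ∧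
    m = ∏ v ∈ ((nbhd E a).erase b ∪ (nbhd E b).erase a).image c, X v}

/-- `φ` is the type I map `φ^λ_{ab}` : it sends the generator `x_a x_b` to `λ` and every
other minimal monomial generator of the edge ideal to `0`. -/
def IsTypeI (k : Type*) [Field k] {V : Type*} (E : V → V → Prop) (a b : V) (hab : E a b)
    (lam : MvPolynomial V k)
    (φ : edgeIdeal k E →ₗ[MvPolynomial V k] MvPolynomial V k ⧸ edgeIdeal k E) : Prop :=
  φ (edgeGen k E a b hab) = Ideal.Quotient.mk (edgeIdeal k E) lam ∧
  ∀ u v (h : E u v), X u * X v ≠ (X a * X b : MvPolynomial V k) →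
    φ (edgeGen k E u v h) = 0

open scoped Classical in
/-- `Γ(L)`: the vertices of `N̄(a)` not in `L` that are adjacent in `N̄(a)`
(the complement of the underlying simple graph induced on `N(a)`) to some vertex of `L`. -/
def GammaF {V : Type*} [Fintype V] [DecidableEq V] (E : V → V → Prop) (a : V)
    (L : Finset V) : Finset V :=
  (nbhd E a \ L).filter (fun g => ∃ u ∈ L, u ≠ g ∧ ¬ E u g)

open scoped Classical in
/-- The set `Γ_{a,L}` of squarefree monomials `√(∏_{g ∈ Γ(L)} x_{c g})` over all choice
functions `c` with `c g ∈ Γ_g = N(g) \ {a}`. -/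
def GammaSet (k : Type*) [Field k] {V : Type*} [Fintype V] [DecidableEq V]
    (E : V → V → Prop) (a : V) (L : Finset V) : Set (MvPolynomial V k) :=
  {m | ∃ c : V → V,
    (∀ g ∈ GammaF E a L, c g ∈ (nbhd E g).erase a) ∧
    m = ∏ v ∈ (GammaF E a L).image c, X v}

/-- `φ` is the type II map `φ^λ_{a,L}` : it sends the generator `x_a x_u` to `λ·x_u`
for `u ∈ L` and every other minimal monomial generator of the edge ideal to `0`. -/
def IsTypeII (k : Type*) [Field k] {V : Type*} (E : V → V → Prop) (a : V) (L : Finset V)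
    (lam : MvPolynomial V k)
    (φ : edgeIdeal k E →ₗ[MvPolynomial V k] MvPolynomial V k ⧸ edgeIdeal k E) : Prop :=
  (∀ u ∈ L, ∀ h : E a u, φ (edgeGen k E a u h) =
      Ideal.Quotient.mk (edgeIdeal k E) (lam * X u)) ∧
  ∀ u v (h : E u v), (∀ x ∈ L, X u * X v ≠ (X a * X x : MvPolynomial V k)) →
    φ (edgeGen k E u v h) = 0

/-- `J` is a monomial ideal: it is generated by a set of (monic) monomials. -/
def IsMonomialIdeal {k : Type*} [Field k] {σ : Type*} (J : Ideal (MvPolynomial σ k)) : Prop :=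
  ∃ A : Set (σ →₀ ℕ),
    J = Ideal.span ((fun d => (monomial d (1 : k) : MvPolynomial σ k)) '' A)

/-- `m` is a minimal monomial generator of the monomial ideal `J`: it is a monic monomial
belonging to `J` such that every monomial dividing `m` and lying in `J` equals `m`. -/
def IsMinMonGen {k : Type*} [Field k] {σ : Type*} (J : Ideal (MvPolynomial σ k))
    (m : MvPolynomial σ k) : Prop :=
  (∃ d, m = monomial d (1 : k)) ∧ m ∈ J ∧
  ∀ d' : σ →₀ ℕ, (monomial d' (1 : k) : MvPolynomial σ k) ∣ m →
    (monomial d' (1 : k) : MvPolynomial σ k) ∈ J →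
    (monomial d' (1 : k) : MvPolynomial σ k) = m

/-- The `k`-algebra map `S = R[y] → R` sending `y` to `x_v` and fixing all the other
variables (`y` is the variable indexed by `none`). -/
def sepProj (k : Type*) [Field k] {V : Type*} (v : V) :
    MvPolynomial (Option V) k →ₐ[k] MvPolynomial V k :=
  aeval (fun o => Option.elim o (X v) X)

/-- `J ⊆ S = R[y]` is a separation of the edge ideal `I(G)` at the variable `x_v`:
`J` is a monomial ideal mapping onto `I(G)` under `y ↦ x_v`, both `x_v` and `y` divide
some minimal monomial generator of `J`, and `y − x_v` is a nonzerodivisor on `S/J`. -/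
def IsSeparationAt (k : Type*) [Field k] {V : Type*} (E : V → V → Prop) (v : V)
    (J : Ideal (MvPolynomial (Option V) k)) : Prop :=
  IsMonomialIdeal J ∧
  Ideal.map (sepProj k v) J = edgeIdeal k E ∧
  (∃ m, IsMinMonGen J m ∧ (X (some v) : MvPolynomial (Option V) k) ∣ m) ∧
  (∃ m, IsMinMonGen J m ∧ (X none : MvPolynomial (Option V) k) ∣ m) ∧
  ∀ f : MvPolynomial (Option V) k, (X none - X (some v)) * f ∈ J → f ∈ J

/-- `v` is a separating vertex of `G`: either `N(v)` is a disjoint union of nonempty sets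
`A`, `B` with every vertex of `A` adjacent to every vertex of `B`, or `G` has an isolated
loop at `v` (a loop at `v` with `N(v) = {v}`). -/
def IsSepVertex {V : Type*} [Fintype V] [DecidableEq V] (E : V → V → Prop) (v : V) : Prop :=
  (∃ A B : Finset V, A.Nonempty ∧ B.Nonempty ∧ Disjoint A B ∧ A ∪ B = nbhd E v ∧
    ∀ a ∈ A, ∀ b ∈ B, E a b) ∨
  (E v v ∧ nbhd E v = {v})


set_option linter.unusedSectionVars false
namespace Sep0

/-- total degree of an exponent vector -/
def deg {σ : Type*} (d : σ →₀ ℕ) : ℕ := d.sum fun _ n => n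

lemma deg_single {σ : Type*} (i : σ) (n : ℕ) : deg (Finsupp.single i n) = n :=
  Finsupp.sum_single_index rfl

lemma deg_add {σ : Type*} (a b : σ →₀ ℕ) : deg (a + b) = deg a + deg b :=
  Finsupp.sum_add_index' (fun _ => rfl) (fun _ _ _ => rfl)

lemma deg_mono {σ : Type*} {a b : σ →₀ ℕ} (h : a ≤ b) : deg a ≤ deg b := by
  obtain ⟨c, rfl⟩ := le_iff_exists_add.mp h
  rw [deg_add]; omega

lemma deg_eq_zero {σ : Type*} {a : σ →₀ ℕ} (h : deg a = 0) : a = 0 := by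
  ext i
  by_contra hi
  exact hi (Finset.sum_eq_zero_iff.mp h i (Finsupp.mem_support_iff.mpr hi))

lemma eq_of_le_of_deg_le {σ : Type*} {a b : σ →₀ ℕ} (h : a ≤ b) (hd : deg b ≤ deg a) :
    a = b := by
  obtain ⟨c, rfl⟩ := le_iff_exists_add.mp h
  rw [deg_add] at hd
  have : c = 0 := deg_eq_zero (by omega)
  simp [this]

lemma pair_le_iff {σ : Type*} [DecidableEq σ] {i j : σ} (hij : i ≠ j) {n : σ →₀ ℕ} :
    Finsupp.single i 1 + Finsupp.single j 1 ≤ n ↔ 1 ≤ n i ∧ 1 ≤ n j := by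
  rw [Finsupp.le_def]
  constructor
  · intro h
    constructor
    · have := h i; simpa [Finsupp.single_apply, hij.symm] using this
    · have := h j; simpa [Finsupp.single_apply, hij] using this
  · rintro ⟨h1, h2⟩ o
    rcases eq_or_ne o i with rfl | hoi
    · simpa [Finsupp.single_apply, hij.symm] using h1
    rcases eq_or_ne o j with rfl | hoj
    · simpa [Finsupp.single_apply, hij] using h2
    · simp [Finsupp.single_apply, Ne.symm hoi, Ne.symm hoj]

lemma pair_eq {V : Type*} {a b a' b' : V}
    (h : (Finsupp.single a 1 + Finsupp.single b 1 : V →₀ ℕ)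
        = Finsupp.single a' 1 + Finsupp.single b' 1) :
    (a' = a ∧ b' = b) ∨ (a' = b ∧ b' = a) := by
  classical
  by_cases haa : a = a'
  · subst haa
    have : (Finsupp.single b 1 : V →₀ ℕ) = Finsupp.single b' 1 := by
      exact add_left_cancel h
    exact Or.inl ⟨rfl, (Finsupp.single_left_injective one_ne_zero this).symm⟩
  · have h1 := DFunLike.congr_fun h a'
    have hba' : b = a' := by
      by_contra hb
      simp [Finsupp.add_apply, Finsupp.single_apply, haa, hb] at h1
      omega
    subst hba'
    rw [add_comm (Finsupp.single a 1)] at h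
    have : (Finsupp.single a 1 : V →₀ ℕ) = Finsupp.single b' 1 := add_left_cancel h
    have := Finsupp.single_left_injective (α := V) (one_ne_zero (α := ℕ)) this
    exact Or.inr ⟨rfl, this.symm⟩


variable {k : Type*} [Field k]

/-- span of a set of monic monomials, given by exponents -/
def mids (k : Type*) [Field k] {σ : Type*} (D : Set (σ →₀ ℕ)) : Ideal (MvPolynomial σ k) :=
  Ideal.span ((fun d => (monomial d (1 : k) : MvPolynomial σ k)) '' D)

lemma mem_mids {σ : Type*} {D : Set (σ →₀ ℕ)} {f : MvPolynomial σ k} :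
    f ∈ mids k D ↔ ∀ m ∈ f.support, ∃ d ∈ D, d ≤ m :=
  mem_ideal_span_monomial_image

lemma monomial_mem_mids {σ : Type*} {D : Set (σ →₀ ℕ)} {m : σ →₀ ℕ} :
    (monomial m (1 : k)) ∈ mids k D ↔ ∃ d ∈ D, d ≤ m := by
  classical
  rw [mem_mids]
  constructor
  · intro h
    exact h m (by simp [support_monomial])
  · intro h m' hm'
    have : m' = m := by
      simpa [support_monomial] using hm'
    subst this; exact h

lemma mids_mono {σ : Type*} {D : Set (σ →₀ ℕ)} {m m' : σ →₀ ℕ}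
    (h : monomial m (1 : k) ∈ mids k D) (hle : m ≤ m') :
    monomial m' (1 : k) ∈ mids k D := by
  rw [monomial_mem_mids] at h ⊢
  obtain ⟨d, hd, hdm⟩ := h
  exact ⟨d, hd, hdm.trans hle⟩

lemma gen_mem_mids {σ : Type*} {D : Set (σ →₀ ℕ)} {d : σ →₀ ℕ} (hd : d ∈ D) :
    (monomial d (1 : k)) ∈ mids k D :=
  monomial_mem_mids.mpr ⟨d, hd, le_rfl⟩

/-- the set of exponents of edge monomials -/
def Edges {V : Type*} (E : V → V → Prop) : Set (V →₀ ℕ) :=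
  {e | ∃ a b, E a b ∧ e = Finsupp.single a 1 + Finsupp.single b 1}

lemma X_mul_X {V : Type*} (a b : V) :
    (X a * X b : MvPolynomial V k)
      = monomial (Finsupp.single a 1 + Finsupp.single b 1) 1 := by
  rw [X, X, monomial_mul, one_mul]

lemma edgeIdeal_eq {V : Type*} (E : V → V → Prop) :
    edgeIdeal k E = mids k (Edges E) := by
  unfold edgeIdeal mids
  congr 1
  ext m
  constructor
  · rintro ⟨a, b, hab, rfl⟩
    exact ⟨_, ⟨a, b, hab, rfl⟩, (X_mul_X a b).symm⟩
  · rintro ⟨e, ⟨a, b, hab, rfl⟩, rfl⟩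
    exact ⟨a, b, hab, (X_mul_X a b).symm⟩

lemma deg_edge {V : Type*} {E : V → V → Prop} {e : V →₀ ℕ} (he : e ∈ Edges E) :
    deg e = 2 := by
  obtain ⟨a, b, _, rfl⟩ := he
  rw [deg_add, deg_single, deg_single]

section OptionSide

variable {V : Type*} [DecidableEq V] (v : V)

/-- exponent of `x_u` in `R[y]` -/
def sx (u : V) : Option V →₀ ℕ := Finsupp.single (some u) 1

/-- exponent of `y` in `R[y]` -/
def sy {V : Type*} : Option V →₀ ℕ := Finsupp.single (none : Option V) 1

/-- the projection of exponents corresponding to `y ↦ x_v` -/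
def pr : (Option V →₀ ℕ) → (V →₀ ℕ) := Finsupp.mapDomain (fun o => o.getD v)

lemma pr_apply (d : Option V →₀ ℕ) (w : V) :
    pr v d w = (if w = v then d none else 0) + d (some w) := by
  classical
  induction d using Finsupp.induction with
  | zero => simp [pr]
  | single_add a n f _ _ ih =>
    rw [pr, Finsupp.mapDomain_add, Finsupp.mapDomain_single, Finsupp.add_apply, ← pr, ih,
      Finsupp.add_apply]
    cases a with
    | none =>
      by_cases hw : w = v
      · subst hw; simp [Finsupp.single_apply, Finsupp.add_apply]; omega
      · simp [Finsupp.single_apply, hw, Ne.symm hw, Finsupp.add_apply]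
    | some u =>
      rcases eq_or_ne w v with rfl | hw
      · simp [Finsupp.single_apply, Finsupp.add_apply]
        try omega
      · simp [Finsupp.single_apply, Finsupp.add_apply, hw]
        try omega

lemma pr_sx (u : V) : pr v (sx u) = Finsupp.single u 1 := Finsupp.mapDomain_single

lemma pr_sy : pr v (sy : Option V →₀ ℕ) = Finsupp.single v 1 := Finsupp.mapDomain_single

lemma pr_add (a b : Option V →₀ ℕ) : pr v (a + b) = pr v a + pr v b :=
  Finsupp.mapDomain_add

lemma deg_pr (d : Option V →₀ ℕ) : deg (pr v d) = deg d :=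
  Finsupp.sum_mapDomain_index (fun _ => rfl) (fun _ _ _ => rfl)

lemma sepProj_eq_rename : sepProj k v = rename (fun o : Option V => o.getD v) := by
  apply algHom_ext
  intro i
  cases i <;> simp [sepProj]

lemma sepProj_monomial (d : Option V →₀ ℕ) (r : k) :
    sepProj k v (monomial d r) = monomial (pr v d) r := by
  rw [sepProj_eq_rename, rename_monomial]; rfl

lemma map_mids (D : Set (Option V →₀ ℕ)) :
    Ideal.map (sepProj k v) (mids k D) = mids k (pr v '' D) := by
  unfold mids
  rw [Ideal.map_span, ← Set.image_comp, ← Set.image_comp]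
  congr 1
  ext f
  constructor
  · rintro ⟨d, hd, rfl⟩
    exact ⟨d, hd, (sepProj_monomial v d 1).symm⟩
  · rintro ⟨d, hd, rfl⟩
    exact ⟨d, hd, sepProj_monomial v d 1⟩

end OptionSide

section Main

variable {V : Type*} [DecidableEq V] {E : V → V → Prop} {v : V}

lemma minMonGen_exp {σ : Type*} {D : Set (σ →₀ ℕ)} {m : MvPolynomial σ k}
    (h : IsMinMonGen (mids k D) m) :
    ∃ d ∈ D, m = monomial d (1 : k) ∧
      ∀ d' ≤ d, monomial d' (1 : k) ∈ mids k D → d' = d := by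
  obtain ⟨⟨d, rfl⟩, hmem, hmin⟩ := h
  obtain ⟨d0, hd0D, hd0le⟩ := monomial_mem_mids.mp hmem
  have heq := hmin d0 (monomial_one_dvd_monomial_one.mpr hd0le) (gen_mem_mids hd0D)
  have hdd : d0 = d := monomial_left_injective one_ne_zero heq
  subst hdd
  refine ⟨d0, hd0D, rfl, ?_⟩
  intro d' hle hmem'
  exact monomial_left_injective one_ne_zero
    (hmin d' (monomial_one_dvd_monomial_one.mpr hle) hmem')

lemma isMinMonGen_of_deg2 {σ : Type*} {D : Set (σ →₀ ℕ)} (hD : ∀ d ∈ D, 2 ≤ deg d)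
    {d : σ →₀ ℕ} (hd : d ∈ D) (hdeg : deg d = 2) :
    IsMinMonGen (mids k D) (monomial d (1 : k)) := by
  refine ⟨⟨d, rfl⟩, gen_mem_mids hd, ?_⟩
  intro d' hdvd hmem
  have hle : d' ≤ d := monomial_one_dvd_monomial_one.mp hdvd
  obtain ⟨d1, hd1, hd1le⟩ := monomial_mem_mids.mp hmem
  have hd1d := hD d1 hd1
  have := deg_mono hd1le
  have hed : d' = d := eq_of_le_of_deg_le hle (by omega)
  rw [hed]


/-- generating exponents of the separated ideal -/
def sepD (E : V → V → Prop) (v : V) (A' B' : Finset V) (lf : Prop) :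
    Set (Option V →₀ ℕ) :=
  ({d | ∃ a b, E a b ∧ a ≠ v ∧ b ≠ v ∧ d = sx a + sx b} ∪
    (fun a => sx v + sx a) '' (↑A' : Set V)) ∪
  ((fun b => sy + sx b) '' (↑B' : Set V) ∪ {d | lf ∧ d = sy + sx v})

/-- membership below a `y`-free generator -/
def Q0 (E : V → V → Prop) (v : V) (A' : Finset V) (n : Option V →₀ ℕ) : Prop :=
  (∃ a b, E a b ∧ a ≠ v ∧ b ≠ v ∧ sx a + sx b ≤ n) ∨ (∃ a ∈ A', sx v + sx a ≤ n)

/-- divisibility by the non-`y` part of a `y`-generator -/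
def Rp (v : V) (B' : Finset V) (lf : Prop) (n : Option V →₀ ℕ) : Prop :=
  (∃ b ∈ B', n (some b) ≠ 0) ∨ (lf ∧ n (some v) ≠ 0)

lemma sxadd_none (a b : V) : (sx a + sx b : Option V →₀ ℕ) none = 0 := by
  simp [sx, Finsupp.add_apply, Finsupp.single_apply]

lemma sxadd_apply (a b u : V) :
    (sx a + sx b : Option V →₀ ℕ) (some u)
      = (if a = u then 1 else 0) + (if b = u then 1 else 0) := by
  simp [sx, Finsupp.add_apply, Finsupp.single_apply]

lemma le_of_none_zero {d n : Option V →₀ ℕ} (h0 : d none = 0)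
    (hs : ∀ u, d (some u) ≤ n (some u)) : d ≤ n := by
  rw [Finsupp.le_def]
  intro o
  cases o with
  | none => simp [h0]
  | some u => exact hs u

lemma Q0_mono {n m : Option V →₀ ℕ} (hsome : ∀ u, n (some u) ≤ m (some u))
    (h : Q0 E v A' n) : Q0 E v A' m := by
  rcases h with ⟨a, b, hab, ha, hb, hle⟩ | ⟨a, haA, hle⟩
  · exact Or.inl ⟨a, b, hab, ha, hb, le_of_none_zero (sxadd_none a b)
      (fun u => (Finsupp.le_def.mp hle (some u)).trans (hsome u))⟩
  · exact Or.inr ⟨a, haA, le_of_none_zero (sxadd_none v a)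
      (fun u => (Finsupp.le_def.mp hle (some u)).trans (hsome u))⟩

lemma Rp_mono {B' : Finset V} {lf : Prop} {n m : Option V →₀ ℕ}
    (hsome : ∀ u, n (some u) ≤ m (some u)) (h : Rp v B' lf n) : Rp v B' lf m := by
  rcases h with ⟨b, hbB, hb⟩ | ⟨h1, hv⟩
  · exact Or.inl ⟨b, hbB, by have := hsome b; omega⟩
  · exact Or.inr ⟨h1, by have := hsome v; omega⟩

lemma keyQ (A' B' : Finset V) (lf : Prop) {n : Option V →₀ ℕ} :
    (∃ d ∈ sepD E v A' B' lf, d ≤ n) ↔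
      (Q0 E v A' n ∨ (n none ≠ 0 ∧ Rp v B' lf n)) := by
  classical
  constructor
  · rintro ⟨d, hd, hle⟩
    rcases hd with (h | ⟨a, haA, rfl⟩) | (⟨b, hbB, rfl⟩ | ⟨h1, rfl⟩)
    · obtain ⟨a, b, hab, ha, hb, rfl⟩ := h
      exact Or.inl (Or.inl ⟨a, b, hab, ha, hb, hle⟩)
    · exact Or.inl (Or.inr ⟨a, haA, hle⟩)
    · have h2 := (pair_le_iff (show (none : Option V) ≠ some b by simp)).mp hle
      exact Or.inr ⟨by omega, Or.inl ⟨b, hbB, by omega⟩⟩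
    · have h2 := (pair_le_iff (show (none : Option V) ≠ some v by simp)).mp hle
      exact Or.inr ⟨by omega, Or.inr ⟨h1, by omega⟩⟩
  · rintro ((⟨a, b, hab, ha, hb, hle⟩ | ⟨a, haA, hle⟩) | ⟨h0, ⟨b, hbB, hb⟩ | ⟨h1, hv⟩⟩)
    · exact ⟨_, Or.inl (Or.inl ⟨a, b, hab, ha, hb, rfl⟩), hle⟩
    · exact ⟨_, Or.inl (Or.inr ⟨a, haA, rfl⟩), hle⟩
    · exact ⟨_, Or.inr (Or.inl ⟨b, hbB, rfl⟩),
        (pair_le_iff (show (none : Option V) ≠ some b by simp)).mpr ⟨by omega, by omega⟩⟩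
    · exact ⟨_, Or.inr (Or.inr ⟨h1, rfl⟩),
        (pair_le_iff (show (none : Option V) ≠ some v by simp)).mpr ⟨by omega, by omega⟩⟩


lemma sep_nzd (A' B' : Finset V) (lf : Prop)
    (hA'v : v ∉ A') (hB'v : v ∉ B') (hdisj : ∀ a ∈ A', a ∉ B')
    (hcross : ∀ a ∈ A', ∀ b ∈ B', E a b)
    (f : MvPolynomial (Option V) k)
    (hf : (X none - X (some v)) * f ∈ mids k (sepD E v A' B' lf)) :
    f ∈ mids k (sepD E v A' B' lf) := by
  classical
  set D := sepD E v A' B' lf with hDdef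
  rw [mem_mids] at hf ⊢
  by_contra hbad
  push_neg at hbad
  set Bad := f.support.filter (fun m => ¬ ∃ d ∈ D, d ≤ m) with hBad
  have hBne : Bad.Nonempty := by
    obtain ⟨m, hm, hnd⟩ := hbad
    refine ⟨m, Finset.mem_filter.mpr ⟨hm, ?_⟩⟩
    push_neg
    exact hnd
  obtain ⟨m, hmB, hmax⟩ := Finset.exists_max_image Bad (fun m => m none) hBne
  have hmsupp : m ∈ f.support := (Finset.mem_filter.mp hmB).1
  have hmQ : ¬ ∃ d ∈ D, d ≤ m := (Finset.mem_filter.mp hmB).2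
  have hcm : coeff m f ≠ 0 := mem_support_iff.mp hmsupp
  have hQm := hmQ
  rw [keyQ] at hQm
  have hQ0m : ¬ Q0 E v A' m := fun h => hQm (Or.inl h)
  have hco : ∀ n : Option V →₀ ℕ, coeff n ((X none - X (some v)) * f)
      = (if none ∈ n.support then coeff (n - Finsupp.single none 1) f else 0)
        - (if some v ∈ n.support then coeff (n - Finsupp.single (some v) 1) f else 0) := by
    intro n
    rw [sub_mul, coeff_sub, coeff_X_mul', coeff_X_mul']
  have hQn : ∀ n : Option V →₀ ℕ, coeff n ((X none - X (some v)) * f) ≠ 0 →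
      ∃ d ∈ D, d ≤ n := fun n h => hf n (mem_support_iff.mpr h)
  by_cases ht : m none = 0
  · -- step 1 : look at the coefficient of m + x_v
    set n2 : Option V →₀ ℕ := m + Finsupp.single (some v) 1 with hn2
    have hn2none : n2 none = 0 := by
      simp [hn2, Finsupp.add_apply, Finsupp.single_apply, ht]
    have hn2v : n2 (some v) = m (some v) + 1 := by
      simp [hn2, Finsupp.add_apply, Finsupp.single_apply]
    have hn2some : ∀ u, u ≠ v → n2 (some u) = m (some u) := by
      intro u hu
      simp [hn2, Finsupp.add_apply, Finsupp.single_apply, Ne.symm hu]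
    have hc2 : coeff n2 ((X none - X (some v)) * f) ≠ 0 := by
      rw [hco n2]
      rw [if_neg (by simp [Finsupp.mem_support_iff, hn2none]),
        if_pos (by simp [Finsupp.mem_support_iff, hn2v]), zero_sub]
      have : n2 - Finsupp.single (some v) 1 = m := add_tsub_cancel_right m _
      rw [this]
      exact neg_ne_zero.mpr hcm
    have hQ2 := hQn n2 hc2
    rw [keyQ] at hQ2
    have hQ02 : Q0 E v A' n2 := by
      rcases hQ2 with h | ⟨h0, _⟩
      · exact h
      · exact absurd hn2none h0
    rcases hQ02 with ⟨a, b, hab, ha, hb, hle⟩ | ⟨a, haA, hle⟩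
    · refine hQ0m (Or.inl ⟨a, b, hab, ha, hb, le_of_none_zero (sxadd_none a b) ?_⟩)
      intro u
      have h2 := Finsupp.le_def.mp hle (some u)
      by_cases hu : u = v
      · subst hu
        rw [sxadd_apply, if_neg ha, if_neg hb]
        omega
      · rw [hn2some u hu] at h2
        exact h2
    · have hav : a ≠ v := fun h => hA'v (h ▸ haA)
      have hma : m (some a) ≠ 0 := by
        have h2 := Finsupp.le_def.mp hle (some a)
        rw [hn2some a hav] at h2
        simp only [sx, Finsupp.add_apply, Finsupp.single_apply] at h2
        simp only [Option.some.injEq] at h2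
        simp at h2
        omega
      have hmv : m (some v) = 0 := by
        by_contra hmv
        refine hQ0m (Or.inr ⟨a, haA, le_of_none_zero (sxadd_none v a) ?_⟩)
        intro u
        rw [sxadd_apply]
        by_cases huv : u = v
        · subst huv
          rw [if_pos rfl, if_neg hav]
          omega
        · by_cases hua : u = a
          · subst hua
            rw [if_neg (fun h : v = u => huv h.symm), if_pos rfl]
            omega
          · rw [if_neg (fun h : v = u => huv h.symm), if_neg (fun h : a = u => hua h.symm)]
            omega
      -- step 2 : look at the coefficient of m + y
      set n : Option V →₀ ℕ := m + Finsupp.single none 1 with hn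
      have hnnone : n none = m none + 1 := by
        simp [hn, Finsupp.add_apply, Finsupp.single_apply]
      have hnsome : ∀ u, n (some u) = m (some u) := by
        intro u
        simp [hn, Finsupp.add_apply, Finsupp.single_apply]
      have hcn : coeff n ((X none - X (some v)) * f) ≠ 0 := by
        rw [hco n]
        rw [if_pos (by simp [Finsupp.mem_support_iff, hnnone]),
          if_neg (by simp [Finsupp.mem_support_iff, hnsome v, hmv])]
        have : n - Finsupp.single none 1 = m := add_tsub_cancel_right m _
        rw [this, sub_zero]
        exact hcm
      have hQn' := hQn n hcn
      rw [keyQ] at hQn'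
      rcases hQn' with h | ⟨_, hR⟩
      · exact hQ0m (Q0_mono (fun u => (hnsome u).le) h)
      · rcases hR with ⟨b, hbB, hnb⟩ | ⟨h1, hnv⟩
        · have hmb : m (some b) ≠ 0 := by rw [hnsome b] at hnb; exact hnb
          have hbv : b ≠ v := fun h => hB'v (h ▸ hbB)
          have hEab : E a b := hcross a haA b hbB
          have hab' : a ≠ b := fun h => hdisj a haA (h ▸ hbB)
          refine hQ0m (Or.inl ⟨a, b, hEab, hav, hbv,
            le_of_none_zero (sxadd_none a b) ?_⟩)
          intro u
          rw [sxadd_apply]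
          by_cases hua : a = u
          · subst hua
            rw [if_pos rfl, if_neg (fun h : b = a => hab' h.symm)]
            omega
          · by_cases hub : b = u
            · subst hub
              rw [if_neg hua, if_pos rfl]
              omega
            · rw [if_neg hua, if_neg hub]
              omega
        · rw [hnsome v] at hnv
          exact hnv hmv
  · -- m has positive y-degree : push the bad monomial upwards
    set n : Option V →₀ ℕ := m + Finsupp.single none 1 with hn
    have hnnone : n none = m none + 1 := by
      simp [hn, Finsupp.add_apply, Finsupp.single_apply]
    have hnsome : ∀ u, n (some u) = m (some u) := by
      intro u
      simp [hn, Finsupp.add_apply, Finsupp.single_apply]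
    have hQnF : ¬ ∃ d ∈ D, d ≤ n := by
      rw [keyQ]
      rintro (h | ⟨_, hR⟩)
      · exact hQ0m (Q0_mono (fun u => (hnsome u).le) h)
      · exact hQm (Or.inr ⟨ht, Rp_mono (fun u => (hnsome u).le) hR⟩)
    have hc0 : coeff n ((X none - X (some v)) * f) = 0 := by
      by_contra hc
      exact hQnF (hQn n hc)
    rw [hco n] at hc0
    rw [if_pos (by simp [Finsupp.mem_support_iff, hnnone])] at hc0
    have hnm : n - Finsupp.single none 1 = m := add_tsub_cancel_right m _
    rw [hnm] at hc0
    by_cases hv : m (some v) = 0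
    · rw [if_neg (by simp [Finsupp.mem_support_iff, hnsome v, hv]), sub_zero] at hc0
      exact hcm hc0
    · rw [if_pos (by simp [Finsupp.mem_support_iff, hnsome v, hv])] at hc0
      set m' : Option V →₀ ℕ := n - Finsupp.single (some v) 1 with hm'
      have hcm' : coeff m' f = coeff m f := (sub_eq_zero.mp hc0).symm
      have hm'some : ∀ u, m' (some u) ≤ m (some u) := by
        intro u
        rw [hm', Finsupp.tsub_apply, hnsome u]
        omega
      have hm'none : m' none = m none + 1 := by
        rw [hm', Finsupp.tsub_apply, hnnone]
        simp [Finsupp.single_apply]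
      have hm'Q : ¬ ∃ d ∈ D, d ≤ m' := by
        rw [keyQ]
        rintro (h | ⟨_, hR⟩)
        · exact hQ0m (Q0_mono hm'some h)
        · exact hQm (Or.inr ⟨ht, Rp_mono hm'some hR⟩)
      have hm'B : m' ∈ Bad := by
        refine Finset.mem_filter.mpr ⟨mem_support_iff.mpr ?_, hm'Q⟩
        rw [hcm']
        exact hcm
      have := hmax m' hm'B
      simp only [hm'none] at this
      omega

lemma exists_separation (hsymm : Symmetric E) (v : V)
    (A' B' : Finset V) (lf : Prop)
    (hA'v : v ∉ A') (hB'v : v ∉ B') (hdisj : ∀ a ∈ A', a ∉ B')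
    (hA'n : ∀ a ∈ A', E v a) (hB'n : ∀ b ∈ B', E v b)
    (hlf : lf → E v v)
    (hcover : ∀ u, E v u → (u ∈ A' ∨ u ∈ B' ∨ (u = v ∧ lf)))
    (hcross : ∀ a ∈ A', ∀ b ∈ B', E a b)
    (hne1 : A'.Nonempty ∨ lf) (hne2 : B'.Nonempty ∨ lf) :
    ∃ J, IsSeparationAt k E v J := by
  classical
  set D : Set (Option V →₀ ℕ) := sepD E v A' B' lf with hD
  have hdegD : ∀ d ∈ D, deg d = 2 := by
    rintro d (h | h)
    · rcases h with ⟨a, b, _, _, _, rfl⟩ | ⟨a, _, rfl⟩ <;>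
        simp [sx, sy, deg_add, deg_single]
    · rcases h with ⟨b, _, rfl⟩ | ⟨_, rfl⟩ <;>
        simp [sx, sy, deg_add, deg_single]
  have hdegD' : ∀ d ∈ D, 2 ≤ deg d := fun d hd => (hdegD d hd).ge
  refine ⟨mids k D, ⟨D, rfl⟩, ?_, ?_, ?_, ?_⟩
  · -- map is the edge ideal
    rw [map_mids, edgeIdeal_eq]
    apply le_antisymm
    · rw [mids, Ideal.span_le]
      rintro _ ⟨_, ⟨d, hd, rfl⟩, rfl⟩
      rcases hd with (⟨a, b, hab, ha, hb, rfl⟩ | ⟨a, haA, rfl⟩) | (⟨b, hbB, rfl⟩ | ⟨h1, rfl⟩)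
      · exact Ideal.subset_span ⟨_, ⟨a, b, hab, rfl⟩, by rw [pr_add, pr_sx, pr_sx]⟩
      · exact Ideal.subset_span ⟨_, ⟨v, a, hA'n a haA, rfl⟩, by rw [pr_add, pr_sx, pr_sx]⟩
      · exact Ideal.subset_span ⟨_, ⟨v, b, hB'n b hbB, rfl⟩, by rw [pr_add, pr_sy, pr_sx]⟩
      · exact Ideal.subset_span ⟨_, ⟨v, v, hlf h1, rfl⟩, by rw [pr_add, pr_sy, pr_sx]⟩
    · rw [mids, Ideal.span_le]
      rintro _ ⟨_, ⟨a, b, hab, rfl⟩, rfl⟩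
      have key : ∀ d ∈ D, pr v d = Finsupp.single a 1 + Finsupp.single b 1 →
          (monomial (Finsupp.single a 1 + Finsupp.single b 1) (1:k)) ∈
            mids k (pr v '' D) := by
        intro d hd hpr
        exact hpr ▸ Ideal.subset_span ⟨_, ⟨d, hd, rfl⟩, rfl⟩
      by_cases hav : a = v
      · rcases hcover b (hav ▸ hab) with hbA | hbB | ⟨hbv, h1⟩
        · exact key _ (Or.inl (Or.inr ⟨b, hbA, rfl⟩))
            (by rw [pr_add, pr_sx, pr_sx, hav])
        · exact key _ (Or.inr (Or.inl ⟨b, hbB, rfl⟩))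
            (by rw [pr_add, pr_sy, pr_sx, hav])
        · exact key _ (Or.inr (Or.inr ⟨h1, rfl⟩))
            (by rw [pr_add, pr_sy, pr_sx, hav, hbv])
      · by_cases hbv : b = v
        · have hva : E v a := hsymm (hbv ▸ hab)
          rcases hcover a hva with haA | haB | ⟨hav', h1⟩
          · exact key _ (Or.inl (Or.inr ⟨a, haA, rfl⟩))
              (by rw [pr_add, pr_sx, pr_sx, hbv]; exact add_comm _ _)
          · exact key _ (Or.inr (Or.inl ⟨a, haB, rfl⟩))
              (by rw [pr_add, pr_sy, pr_sx, hbv]; exact add_comm _ _)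
          · exact absurd hav' hav
        · exact key _ (Or.inl (Or.inl ⟨a, b, hab, hav, hbv, rfl⟩))
            (by rw [pr_add, pr_sx, pr_sx])
  · -- a minimal generator divisible by x_v
    rcases hne1 with ⟨a, haA⟩ | h1
    · refine ⟨monomial (sx v + sx a) 1, isMinMonGen_of_deg2 hdegD'
        (Or.inl (Or.inr ⟨a, haA, rfl⟩)) (by simp [sx, deg_add, deg_single]), ?_⟩
      rw [X_dvd_monomial]
      refine Or.inr ?_
      simp [sx, Finsupp.add_apply, Finsupp.single_apply]
    · refine ⟨monomial (sy + sx v) 1, isMinMonGen_of_deg2 hdegD'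
        (Or.inr (Or.inr ⟨h1, rfl⟩)) (by simp [sx, sy, deg_add, deg_single]), ?_⟩
      rw [X_dvd_monomial]
      refine Or.inr ?_
      simp [sx, sy, Finsupp.add_apply, Finsupp.single_apply]
  · -- a minimal generator divisible by y
    rcases hne2 with ⟨b, hbB⟩ | h1
    · refine ⟨monomial (sy + sx b) 1, isMinMonGen_of_deg2 hdegD'
        (Or.inr (Or.inl ⟨b, hbB, rfl⟩)) (by simp [sx, sy, deg_add, deg_single]), ?_⟩
      rw [X_dvd_monomial]
      refine Or.inr ?_
      simp [sx, sy, Finsupp.add_apply, Finsupp.single_apply]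
    · refine ⟨monomial (sy + sx v) 1, isMinMonGen_of_deg2 hdegD'
        (Or.inr (Or.inr ⟨h1, rfl⟩)) (by simp [sx, sy, deg_add, deg_single]), ?_⟩
      rw [X_dvd_monomial]
      refine Or.inr ?_
      simp [sx, sy, Finsupp.add_apply, Finsupp.single_apply]
  · -- y - x_v is a nonzerodivisor
    intro f hmem
    exact sep_nzd A' B' lf hA'v hB'v hdisj hcross f hmem

lemma X_mul_monomial {σ : Type*} (i : σ) (s : σ →₀ ℕ) (r : k) :
    (X i : MvPolynomial σ k) * monomial s r = monomial (Finsupp.single i 1 + s) r := by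
  rw [X, monomial_mul, one_mul]

lemma mem_nbhd [Fintype V] {u : V} : u ∈ nbhd E v ↔ E v u := by
  simp [nbhd]

lemma forwardMain [Fintype V] (hsymm : Symmetric E)
    (h : ∃ J : Ideal (MvPolynomial (Option V) k), IsSeparationAt k E v J) :
    IsSepVertex E v := by
  classical
  obtain ⟨J, hmono, hmap, hxgen, hygen, hnzd⟩ := h
  by_cases hloop : E v v
  · by_cases hN : nbhd E v = {v}
    · exact Or.inr ⟨hloop, hN⟩
    · left
      have hvN : v ∈ nbhd E v := mem_nbhd.mpr hloop
      have hBne : ((nbhd E v).erase v).Nonempty := by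
        by_contra hcon
        rw [Finset.not_nonempty_iff_eq_empty] at hcon
        apply hN
        apply Finset.eq_singleton_iff_unique_mem.mpr ⟨hvN, ?_⟩
        intro x hx
        by_contra hxv
        exact Finset.notMem_empty x (hcon ▸ Finset.mem_erase.mpr ⟨hxv, hx⟩)
      refine ⟨{v}, (nbhd E v).erase v, Finset.singleton_nonempty v, hBne, ?_, ?_, ?_⟩
      · exact Finset.disjoint_singleton_left.mpr (Finset.notMem_erase v _)
      · rw [← Finset.insert_eq, Finset.insert_erase hvN]
      · intro a ha b hb
        rw [Finset.mem_singleton] at ha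
        subst ha
        exact mem_nbhd.mp (Finset.mem_of_mem_erase hb)
  · -- no loop at v : analyse the separation
    obtain ⟨D, hJD⟩ := hmono
    have hJ : J = mids k D := hJD
    subst hJ
    have hmapD : edgeIdeal k E = mids k (pr v '' D) := by rw [← hmap, map_mids]
    have hedge_mem : ∀ e : V →₀ ℕ,
        (monomial e (1 : k) ∈ edgeIdeal k E ↔ ∃ e' ∈ Edges E, e' ≤ e) := by
      intro e
      rw [edgeIdeal_eq]
      exact monomial_mem_mids
    have hD2 : ∀ d ∈ D, 2 ≤ deg d := by
      intro d hd
      have h1 : monomial (pr v d) (1 : k) ∈ edgeIdeal k E := by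
        rw [hmapD]; exact gen_mem_mids ⟨d, hd, rfl⟩
      rw [hedge_mem] at h1
      obtain ⟨e', he', hle⟩ := h1
      have h2 := deg_edge he'
      have h3 := deg_mono hle
      have h4 := deg_pr v d
      omega
    have hlow : ∀ nn : Option V →₀ ℕ, deg nn ≤ 1 → monomial nn (1 : k) ∉ mids k D := by
      intro nn hdeg hmem
      obtain ⟨d, hd, hle⟩ := monomial_mem_mids.mp hmem
      have := hD2 d hd
      have := deg_mono hle
      omega
    have claim1 : ∀ s : Option V →₀ ℕ,
        monomial (sy + s) (1 : k) ∈ mids k D →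
        monomial (sx v + s) (1 : k) ∈ mids k D → monomial s (1 : k) ∈ mids k D := by
      intro s h1 h2
      apply hnzd
      rw [sub_mul, X_mul_monomial, X_mul_monomial]
      exact Ideal.sub_mem _ h1 h2
    have hliftEdge : ∀ e ∈ Edges E, ∃ d ∈ D, pr v d = e := by
      intro e he
      have h1 : monomial e (1 : k) ∈ edgeIdeal k E := by
        rw [edgeIdeal_eq]; exact gen_mem_mids he
      rw [hmapD] at h1
      obtain ⟨p, hp, hple⟩ := monomial_mem_mids.mp h1
      obtain ⟨d, hdD, rfl⟩ := hp
      have h2 : monomial (pr v d) (1 : k) ∈ edgeIdeal k E := by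
        rw [hmapD]; exact gen_mem_mids ⟨d, hdD, rfl⟩
      rw [hedge_mem] at h2
      obtain ⟨e', he', hle'⟩ := h2
      have h3 := deg_edge he
      have h4 := deg_edge he'
      have h5 := deg_mono hle'
      exact ⟨d, hdD, eq_of_le_of_deg_le hple (by omega)⟩
    set A : Finset V :=
      (nbhd E v).filter (fun u => monomial (sx v + sx u) (1 : k) ∈ mids k D) with hAdef
    set B : Finset V :=
      (nbhd E v).filter (fun u => monomial (sy + sx u) (1 : k) ∈ mids k D) with hBdef
    have hvnotnb : ∀ u ∈ nbhd E v, u ≠ v := by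
      intro u hu hc
      subst hc
      exact hloop (mem_nbhd.mp hu)
    have hABdisj : ∀ u ∈ A, u ∉ B := by
      intro u huA huB
      have h1 := (Finset.mem_filter.mp huA).2
      have h2 := (Finset.mem_filter.mp huB).2
      exact hlow (sx u) (by rw [sx, deg_single]) (claim1 _ h2 h1)
    have hcoverAB : ∀ u ∈ nbhd E v, u ∈ A ∪ B := by
      intro u hu
      have hEvu : E v u := mem_nbhd.mp hu
      have huv : u ≠ v := hvnotnb u hu
      obtain ⟨d, hdD, hprd⟩ :=
        hliftEdge (Finsupp.single v 1 + Finsupp.single u 1) ⟨v, u, hEvu, rfl⟩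
      have hd1 : d none + d (some v) = 1 := by
        have h1 := pr_apply v d v
        rw [hprd] at h1
        rw [if_pos rfl] at h1
        have h2 : (Finsupp.single v 1 + Finsupp.single u 1 : V →₀ ℕ) v = 1 := by
          simp [Finsupp.add_apply, Finsupp.single_apply, huv]
        omega
      have hd2 : d (some u) = 1 := by
        have h1 := pr_apply v d u
        rw [hprd] at h1
        rw [if_neg huv] at h1
        have h2 : (Finsupp.single v 1 + Finsupp.single u 1 : V →₀ ℕ) u = 1 := by
          simp [Finsupp.add_apply, Finsupp.single_apply, Ne.symm huv]
        omega
      have hd3 : ∀ w : V, w ≠ v → w ≠ u → d (some w) = 0 := by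
        intro w hwv hwu
        have h1 := pr_apply v d w
        rw [hprd] at h1
        rw [if_neg hwv] at h1
        have h2 : (Finsupp.single v 1 + Finsupp.single u 1 : V →₀ ℕ) w = 0 := by
          simp [Finsupp.add_apply, Finsupp.single_apply, Ne.symm hwv, Ne.symm hwu]
        omega
      have hd4 : d none = 1 ∧ d (some v) = 0 ∨ d none = 0 ∧ d (some v) = 1 := by omega
      rcases hd4 with ⟨h3, h4⟩ | ⟨h3, h4⟩
      · -- d = sy + sx u
        have hde : d = sy + sx u := by
          ext o
          cases o with
          | none => simp [sy, sx, Finsupp.add_apply, Finsupp.single_apply, h3]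
          | some w =>
            rcases eq_or_ne w u with rfl | hwu
            · simp [sy, sx, Finsupp.add_apply, Finsupp.single_apply, hd2]
            · rcases eq_or_ne w v with rfl | hwv
              · simp [sy, sx, Finsupp.add_apply, Finsupp.single_apply, h4,
                  Ne.symm hwu]
              · simp [sy, sx, Finsupp.add_apply, Finsupp.single_apply, hd3 w hwv hwu,
                  Ne.symm hwu]
        apply Finset.mem_union_right
        rw [hBdef, Finset.mem_filter]
        exact ⟨hu, by rw [← hde]; exact gen_mem_mids hdD⟩
      · -- d = sx v + sx u
        have hde : d = sx v + sx u := by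
          ext o
          cases o with
          | none => simp [sx, Finsupp.add_apply, Finsupp.single_apply, h3]
          | some w =>
            rcases eq_or_ne w u with rfl | hwu
            · simp [sx, Finsupp.add_apply, Finsupp.single_apply, hd2, Ne.symm huv]
            · rcases eq_or_ne w v with rfl | hwv
              · simp [sx, Finsupp.add_apply, Finsupp.single_apply, h4,
                  Ne.symm hwu]
              · simp [sx, Finsupp.add_apply, Finsupp.single_apply, hd3 w hwv hwu,
                  Ne.symm hwu, Ne.symm hwv]
        apply Finset.mem_union_left
        rw [hAdef, Finset.mem_filter]
        exact ⟨hu, by rw [← hde]; exact gen_mem_mids hdD⟩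
    have hcrossAB : ∀ a ∈ A, ∀ b ∈ B, E a b := by
      intro a haA b hbB
      have h1 := (Finset.mem_filter.mp haA).2
      have h2 := (Finset.mem_filter.mp hbB).2
      have h1' : monomial (sx v + (sx a + sx b)) (1 : k) ∈ mids k D :=
        mids_mono h1 (add_le_add_right (self_le_add_right _ _) _)
      have h2' : monomial (sy + (sx a + sx b)) (1 : k) ∈ mids k D :=
        mids_mono h2 (add_le_add_right (le_add_self) _)
      have h3 := claim1 _ h2' h1'
      have h4 : monomial (Finsupp.single a 1 + Finsupp.single b 1) (1 : k) ∈ edgeIdeal k E := by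
        have h5 := Ideal.mem_map_of_mem (sepProj k v) h3
        rw [hmap, sepProj_monomial, pr_add, pr_sx, pr_sx] at h5
        exact h5
      rw [hedge_mem] at h4
      obtain ⟨e', he', hle'⟩ := h4
      have h6 : e' = Finsupp.single a 1 + Finsupp.single b 1 :=
        eq_of_le_of_deg_le hle'
          (by have := deg_edge he'; rw [deg_add, deg_single, deg_single]; omega)
      obtain ⟨a', b', hab', he''⟩ := he'
      rw [he''] at h6
      rcases pair_eq h6 with ⟨h7, h8⟩ | ⟨h7, h8⟩
      · rw [h7, h8]; exact hab'
      · rw [h7, h8]; exact hsymm hab'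
    have hAne : A.Nonempty := by
      obtain ⟨mx, hmin, hxdvd⟩ := hxgen
      obtain ⟨dh, hdhD, hmx, hminprop⟩ := minMonGen_exp hmin
      subst hmx
      have hxv : dh (some v) ≠ 0 := by
        rcases X_dvd_monomial.mp hxdvd with h | h
        · exact absurd h one_ne_zero
        · exact h
      have h1 : monomial (pr v dh) (1 : k) ∈ edgeIdeal k E := by
        rw [hmapD]; exact gen_mem_mids ⟨dh, hdhD, rfl⟩
      rw [hedge_mem] at h1
      obtain ⟨e, he, hle⟩ := h1
      obtain ⟨a, b, hab, rfl⟩ := he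
      have main : ∀ u, u ≠ v → E v u → (1 : ℕ) ≤ dh (some u) → A.Nonempty := by
        intro u huv hEvu hdu
        have hunb : u ∈ nbhd E v := mem_nbhd.mpr hEvu
        rcases Finset.mem_union.mp (hcoverAB u hunb) with huA | huB
        · exact ⟨u, huA⟩
        · exfalso
          have hBmem := (Finset.mem_filter.mp huB).2
          have hsxvle : sx v ≤ dh := by
            rw [sx, Finsupp.single_le_iff]
            omega
          set s := dh - sx v with hs
          have hdheq : sx v + s = dh := by
            rw [hs, add_comm]
            exact tsub_add_cancel_of_le hsxvle
          have h2 : monomial (sx v + s) (1 : k) ∈ mids k D := by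
            rw [hdheq]; exact gen_mem_mids hdhD
          have hsu : sx u ≤ s := by
            rw [sx, Finsupp.single_le_iff, hs, Finsupp.tsub_apply]
            have hz : (sx v) (some u) = 0 := by
              simp [sx, Finsupp.single_apply, Ne.symm huv]
            omega
          have h1' : monomial (sy + s) (1 : k) ∈ mids k D :=
            mids_mono hBmem (add_le_add_right hsu _)
          have h3 := claim1 s h1' h2
          have h4 : s = dh := hminprop s tsub_le_self h3
          have h5 : s (some v) = dh (some v) - 1 := by
            rw [hs, Finsupp.tsub_apply]
            simp [sx, Finsupp.single_apply]
          rw [h4] at h5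
          omega
      by_cases hav : a = v
      · have hbv : b ≠ v := by
          rintro rfl
          rw [hav] at hab
          exact hloop hab
        apply main b hbv (hav ▸ hab)
        have h6 := Finsupp.le_def.mp hle b
        rw [pr_apply, if_neg hbv] at h6
        have h7 : (Finsupp.single a 1 + Finsupp.single b 1 : V →₀ ℕ) b = 1 := by
          simp [Finsupp.add_apply, Finsupp.single_apply, hav, Ne.symm hbv]
        omega
      · by_cases hbv : b = v
        · have hEva : E v a := hsymm (hbv ▸ hab)
          apply main a hav hEva
          have h6 := Finsupp.le_def.mp hle a
          rw [pr_apply, if_neg hav] at h6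
          have h7 : (Finsupp.single a 1 + Finsupp.single b 1 : V →₀ ℕ) a = 1 := by
            simp [Finsupp.add_apply, Finsupp.single_apply, hbv, Ne.symm hav]
          omega
        · exfalso
          obtain ⟨d, hdD, hprd⟩ := hliftEdge _ ⟨a, b, hab, rfl⟩
          have hd0 : d none = 0 ∧ d (some v) = 0 := by
            have h6 := pr_apply v d v
            rw [hprd, if_pos rfl] at h6
            have h7 : (Finsupp.single a 1 + Finsupp.single b 1 : V →₀ ℕ) v = 0 := by
              simp [Finsupp.add_apply, Finsupp.single_apply, hav, hbv]
            omega
          have hdle : d ≤ dh := by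
            rw [Finsupp.le_def]
            intro o
            cases o with
            | none => rw [hd0.1]; exact Nat.zero_le _
            | some w =>
              rcases eq_or_ne w v with rfl | hwv
              · rw [hd0.2]; exact Nat.zero_le _
              · have h6 := pr_apply v d w
                rw [hprd, if_neg hwv] at h6
                have h7 := Finsupp.le_def.mp hle w
                have h8 := pr_apply v dh w
                rw [if_neg hwv] at h8
                omega
          have h9 := hminprop d hdle (gen_mem_mids hdD)
          rw [← h9] at hxv
          exact hxv hd0.2
    have hBne : B.Nonempty := by
      obtain ⟨my, hmin, hydvd⟩ := hygen
      obtain ⟨dh, hdhD, hmy, hminprop⟩ := minMonGen_exp hmin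
      subst hmy
      have hyv : dh none ≠ 0 := by
        rcases X_dvd_monomial.mp hydvd with h | h
        · exact absurd h one_ne_zero
        · exact h
      have h1 : monomial (pr v dh) (1 : k) ∈ edgeIdeal k E := by
        rw [hmapD]; exact gen_mem_mids ⟨dh, hdhD, rfl⟩
      rw [hedge_mem] at h1
      obtain ⟨e, he, hle⟩ := h1
      obtain ⟨a, b, hab, rfl⟩ := he
      have main : ∀ u, u ≠ v → E v u → (1 : ℕ) ≤ dh (some u) → B.Nonempty := by
        intro u huv hEvu hdu
        have hunb : u ∈ nbhd E v := mem_nbhd.mpr hEvu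
        rcases Finset.mem_union.mp (hcoverAB u hunb) with huA | huB
        · exfalso
          have hAmem := (Finset.mem_filter.mp huA).2
          have hsyle : (sy : Option V →₀ ℕ) ≤ dh := by
            rw [sy, Finsupp.single_le_iff]
            omega
          set s := dh - (sy : Option V →₀ ℕ) with hs
          have hdheq : sy + s = dh := by
            rw [hs, add_comm]
            exact tsub_add_cancel_of_le hsyle
          have h1' : monomial (sy + s) (1 : k) ∈ mids k D := by
            rw [hdheq]; exact gen_mem_mids hdhD
          have hsu : sx u ≤ s := by
            rw [sx, Finsupp.single_le_iff, hs, Finsupp.tsub_apply]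
            have hz : (sy : Option V →₀ ℕ) (some u) = 0 := by
              simp [sy, Finsupp.single_apply]
            omega
          have h2 : monomial (sx v + s) (1 : k) ∈ mids k D :=
            mids_mono hAmem (add_le_add_right hsu _)
          have h3 := claim1 s h1' h2
          have h4 : s = dh := hminprop s tsub_le_self h3
          have h5 : s none = dh none - 1 := by
            rw [hs, Finsupp.tsub_apply]
            simp [sy, Finsupp.single_apply]
          rw [h4] at h5
          omega
        · exact ⟨u, huB⟩
      by_cases hav : a = v
      · have hbv : b ≠ v := by
          rintro rfl
          rw [hav] at hab
          exact hloop hab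
        apply main b hbv (hav ▸ hab)
        have h6 := Finsupp.le_def.mp hle b
        rw [pr_apply, if_neg hbv] at h6
        have h7 : (Finsupp.single a 1 + Finsupp.single b 1 : V →₀ ℕ) b = 1 := by
          simp [Finsupp.add_apply, Finsupp.single_apply, hav, Ne.symm hbv]
        omega
      · by_cases hbv : b = v
        · have hEva : E v a := hsymm (hbv ▸ hab)
          apply main a hav hEva
          have h6 := Finsupp.le_def.mp hle a
          rw [pr_apply, if_neg hav] at h6
          have h7 : (Finsupp.single a 1 + Finsupp.single b 1 : V →₀ ℕ) a = 1 := by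
            simp [Finsupp.add_apply, Finsupp.single_apply, hbv, Ne.symm hav]
          omega
        · exfalso
          obtain ⟨d, hdD, hprd⟩ := hliftEdge _ ⟨a, b, hab, rfl⟩
          have hd0 : d none = 0 ∧ d (some v) = 0 := by
            have h6 := pr_apply v d v
            rw [hprd, if_pos rfl] at h6
            have h7 : (Finsupp.single a 1 + Finsupp.single b 1 : V →₀ ℕ) v = 0 := by
              simp [Finsupp.add_apply, Finsupp.single_apply, hav, hbv]
            omega
          have hdle : d ≤ dh := by
            rw [Finsupp.le_def]
            intro o
            cases o with
            | none => rw [hd0.1]; exact Nat.zero_le _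
            | some w =>
              rcases eq_or_ne w v with rfl | hwv
              · rw [hd0.2]; exact Nat.zero_le _
              · have h6 := pr_apply v d w
                rw [hprd, if_neg hwv] at h6
                have h7 := Finsupp.le_def.mp hle w
                have h8 := pr_apply v dh w
                rw [if_neg hwv] at h8
                omega
          have h9 := hminprop d hdle (gen_mem_mids hdD)
          rw [← h9] at hyv
          exact hyv hd0.1
    exact Or.inl ⟨A, B, hAne, hBne, Finset.disjoint_left.mpr hABdisj,
      Finset.Subset.antisymm
        (Finset.union_subset (Finset.filter_subset _ _) (Finset.filter_subset _ _))
        (fun u hu => hcoverAB u hu), hcrossAB⟩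

end Main

end Sep0

/-- For a finite graph `G` (loops allowed) with edge ideal `I(G)` and a
vertex `v`, the ideal `I(G)` admits a separation at the variable `x_v` if and only if `v`
is a separating vertex of `G`. -/
theorem statement0 {k : Type*} [Field k] {V : Type*} [Fintype V] [DecidableEq V]
    (E : V → V → Prop) (hsymm : Symmetric E) (v : V) :
    (∃ J : Ideal (MvPolynomial (Option V) k), IsSeparationAt k E v J) ↔ IsSepVertex E v := by
  constructor
  · exact fun h => Sep0.forwardMain hsymm h
  · intro hsep
    classical
    rcases hsep with ⟨A, B, hAne, hBne, hAB, hUn, hcross⟩ | ⟨hloop, hN⟩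
    · refine Sep0.exists_separation hsymm v (A.erase v) (B.erase v) (v ∈ A ∨ v ∈ B)
        (Finset.notMem_erase v A) (Finset.notMem_erase v B) ?_ ?_ ?_ ?_ ?_ ?_ ?_ ?_
      · intro a ha hb
        exact Finset.disjoint_left.mp hAB (Finset.mem_of_mem_erase ha)
          (Finset.mem_of_mem_erase hb)
      · intro a ha
        have : a ∈ nbhd E v := hUn ▸ Finset.mem_union_left _ (Finset.mem_of_mem_erase ha)
        exact Sep0.mem_nbhd.mp this
      · intro b hb
        have : b ∈ nbhd E v := hUn ▸ Finset.mem_union_right _ (Finset.mem_of_mem_erase hb)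
        exact Sep0.mem_nbhd.mp this
      · intro h1
        have : v ∈ nbhd E v := by
          rcases h1 with h | h
          · exact hUn ▸ Finset.mem_union_left _ h
          · exact hUn ▸ Finset.mem_union_right _ h
        exact Sep0.mem_nbhd.mp this
      · intro u hu
        have humem : u ∈ A ∪ B := hUn ▸ Sep0.mem_nbhd.mpr hu
        rcases eq_or_ne u v with rfl | huv
        · rcases Finset.mem_union.mp humem with h | h
          · exact Or.inr (Or.inr ⟨rfl, Or.inl h⟩)
          · exact Or.inr (Or.inr ⟨rfl, Or.inr h⟩)
        · rcases Finset.mem_union.mp humem with h | h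
          · exact Or.inl (Finset.mem_erase.mpr ⟨huv, h⟩)
          · exact Or.inr (Or.inl (Finset.mem_erase.mpr ⟨huv, h⟩))
      · intro a ha b hb
        exact hcross a (Finset.mem_of_mem_erase ha) b (Finset.mem_of_mem_erase hb)
      · obtain ⟨a, ha⟩ := hAne
        rcases eq_or_ne a v with rfl | hav
        · exact Or.inr (Or.inl ha)
        · exact Or.inl ⟨a, Finset.mem_erase.mpr ⟨hav, ha⟩⟩
      · obtain ⟨b, hb⟩ := hBne
        rcases eq_or_ne b v with rfl | hbv
        · exact Or.inr (Or.inr hb)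
        · exact Or.inl ⟨b, Finset.mem_erase.mpr ⟨hbv, hb⟩⟩
    · refine Sep0.exists_separation hsymm v ∅ ∅ True
        (Finset.notMem_empty v) (Finset.notMem_empty v) ?_ ?_ ?_ ?_ ?_ ?_ ?_ ?_
      · intro a ha
        exact absurd ha (Finset.notMem_empty a)
      · intro a ha
        exact absurd ha (Finset.notMem_empty a)
      · intro b hb
        exact absurd hb (Finset.notMem_empty b)
      · exact fun _ => hloop
      · intro u hu
        have : u ∈ nbhd E v := Sep0.mem_nbhd.mpr hu
        rw [hN, Finset.mem_singleton] at this
        exact Or.inr (Or.inr ⟨this, trivial⟩)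
      · intro a ha
        exact absurd ha (Finset.notMem_empty a)
      · exact Or.inr trivial
      · exact Or.inr trivial

end
end

section
/- Let J ⊆ S = R[y] be a separation of the edge ideal I at the variable x_v, and let Ĩ ⊆ S be the image of J under the R-algebra automorphism of S sending y to x_v + y. Then S/Ĩ is flat as a module over the subring k[y] ⊆ S, and the quotient (S/Ĩ)/(y·(S/Ĩ)) is isomorphic as an R-algebra to R/I; that is, every separation of I is a flat deformation of R/I over the polynomial ring k[y]. -/
open MvPolynomial

noncomputable section

open scoped TensorProduct in
/-- Flatness over a PID from torsion-freeness. -/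
theorem flat_of_torsionfree {R M : Type*} [CommRing R] [IsDomain R] [IsPrincipalIdealRing R]
    [AddCommGroup M] [Module R M]
    (h : ∀ (a : R) (m : M), a ≠ 0 → a • m = 0 → m = 0) : Module.Flat R M := by
  rw [Module.Flat.iff_rTensor_injective']
  intro I
  obtain ⟨a, rfl⟩ := (IsPrincipalIdealRing.principal I).principal
  rw [Ideal.submodule_span_eq]
  have ha : a ∈ Ideal.span {a} := Ideal.mem_span_singleton_self a
  have hsurj : ∀ x : (Ideal.span {a} : Ideal R) ⊗[R] M,
      ∃ m : M, (⟨a, ha⟩ : Ideal.span {a}) ⊗ₜ[R] m = x := by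
    intro x
    induction x using TensorProduct.induction_on with
    | zero => exact ⟨0, TensorProduct.tmul_zero _ _⟩
    | tmul i m =>
        obtain ⟨r, hr⟩ := Ideal.mem_span_singleton'.mp i.2
        refine ⟨r • m, ?_⟩
        have : i = r • (⟨a, ha⟩ : Ideal.span {a}) := by
          ext; simp [← hr, smul_eq_mul]
        rw [this, ← TensorProduct.smul_tmul]
    | add x y hx hy =>
        obtain ⟨mx, hmx⟩ := hx
        obtain ⟨my, hmy⟩ := hy
        exact ⟨mx + my, by rw [TensorProduct.tmul_add, hmx, hmy]⟩
  intro x y hxy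
  have h0 : LinearMap.rTensor M (Submodule.subtype (Ideal.span {a})) (x - y) = 0 := by
    rw [map_sub, hxy, sub_self]
  obtain ⟨m, hm⟩ := hsurj (x - y)
  rw [← hm] at h0
  rw [LinearMap.rTensor_tmul] at h0
  have ham : a • m = 0 := by
    have := congrArg (TensorProduct.lid R M) h0
    simpa using this
  have hxy0 : x - y = 0 := by
    rw [← hm]
    by_cases haz : a = 0
    · have : (⟨a, ha⟩ : Ideal.span {a}) = 0 := by ext; simp [haz]
      rw [this, TensorProduct.zero_tmul]
    · rw [h a m haz ham, TensorProduct.tmul_zero]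
  exact sub_eq_zero.mp hxy0

/-- A polynomial with nonzero constant coefficient is a nonzerodivisor mod a monomial ideal. -/
theorem monomial_span_regular {K : Type*} [Field K] {σ : Type*} (A : Set (σ →₀ ℕ))
    (h g : MvPolynomial σ K) (hc : constantCoeff h ≠ 0)
    (hm : h * g ∈ Ideal.span ((fun d => monomial d (1 : K)) '' A)) :
    g ∈ Ideal.span ((fun d => monomial d (1 : K)) '' A) := by
  classical
  set J := Ideal.span ((fun d => monomial d (1 : K)) '' A) with hJdef
  set P : (σ →₀ ℕ) → Prop := fun d => ∃ s ∈ A, s ≤ d with hPdef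
  set gB : MvPolynomial σ K :=
    ∑ d ∈ g.support.filter (fun d => ¬ P d), monomial d (coeff d g) with hgB
  have degadd : ∀ a b : (σ →₀ ℕ), Finsupp.degree (a + b) = Finsupp.degree a + Finsupp.degree b := by
    intro a b; simp [Finsupp.degree_eq_weight_one, map_add]
  have hBc : ∀ d, coeff d gB = if d ∈ g.support ∧ ¬ P d then coeff d g else 0 := by
    intro d
    rw [hgB, coeff_sum]
    have : ∀ e ∈ g.support.filter (fun d => ¬ P d),
        coeff d (monomial e (coeff e g)) = if e = d then coeff e g else 0 := fun e _ => by
      rw [coeff_monomial]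
    rw [Finset.sum_congr rfl this, Finset.sum_ite_eq' _ d (fun e => coeff e g)]
    by_cases hd : d ∈ g.support.filter (fun d => ¬ P d)
    · rw [if_pos hd, if_pos ⟨(Finset.mem_filter.mp hd).1, (Finset.mem_filter.mp hd).2⟩]
    · rw [if_neg hd, if_neg (fun hcon => hd (Finset.mem_filter.mpr hcon))]
  have hBg : ∀ d, ¬ P d → coeff d gB = coeff d g := by
    intro d hd
    rw [hBc]
    by_cases hs : d ∈ g.support
    · simp [hs, hd]
    · simp [notMem_support_iff.mp hs]
  have hBP : ∀ d ∈ gB.support, ¬ P d := by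
    intro d hd
    have := mem_support_iff.mp hd
    rw [hBc] at this
    by_contra hP
    simp [hP] at this
  have hgsub : g - gB ∈ J := by
    rw [hJdef, mem_ideal_span_monomial_image]
    intro d hd
    by_contra hP
    have h1 : coeff d gB = coeff d g := hBg d hP
    have : coeff d (g - gB) = 0 := by rw [coeff_sub, h1, sub_self]
    exact mem_support_iff.mp hd this
  have hhB : h * gB ∈ J := by
    have heq : h * gB = h * g - h * (g - gB) := by ring
    rw [heq]
    exact J.sub_mem hm (J.mul_mem_left h hgsub)
  have hB0 : gB = 0 := by
    by_contra hne
    obtain ⟨d, hdmem, hdmin⟩ :=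
      Finset.exists_min_image gB.support Finsupp.degree (support_nonempty.mpr hne)
    have hcd : coeff d (h * gB) = coeff 0 h * coeff d gB := by
      rw [coeff_mul]
      apply Finset.sum_eq_single_of_mem (0, d)
      · rw [Finset.HasAntidiagonal.mem_antidiagonal, zero_add]
      · rintro ⟨b1, b2⟩ hb hbne
        by_cases hb2 : b2 ∈ gB.support
        · exfalso
          have hbsum : b1 + b2 = d := Finset.HasAntidiagonal.mem_antidiagonal.mp hb
          have hdeg : Finsupp.degree b1 + Finsupp.degree b2 = Finsupp.degree d := by
            rw [← hbsum, degadd]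
          have hmin := hdmin b2 hb2
          have hb1z : Finsupp.degree b1 = 0 := by omega
          have hb1 : b1 = 0 := (Finsupp.degree_eq_zero_iff b1).mp hb1z
          apply hbne
          rw [hb1] at hbsum ⊢
          rw [zero_add] at hbsum
          rw [hbsum]
        · rw [notMem_support_iff.mp hb2, mul_zero]
    have hdne : coeff d (h * gB) ≠ 0 := by
      rw [hcd]
      exact mul_ne_zero (by rw [← constantCoeff_eq]; exact hc) (mem_support_iff.mp hdmem)
    have hhB' := hhB
    rw [hJdef, mem_ideal_span_monomial_image] at hhB'
    exact hBP d hdmem (hhB' d (mem_support_iff.mpr hdne))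
  rw [hB0, sub_zero] at hgsub
  exact hgsub

/-- Key kernel lemma for `sepProj`. -/
theorem sub_rename_sep_mem {k : Type*} [Field k] {V : Type*} (v : V)
    (f : MvPolynomial (Option V) k) :
    f - rename some (sepProj k v f) ∈
      Ideal.span {(X none - X (some v) : MvPolynomial (Option V) k)} := by
  induction f using MvPolynomial.induction_on with
  | C a =>
      have h1 : (sepProj k v) (C a : MvPolynomial (Option V) k)
          = (C a : MvPolynomial V k) := by simp [sepProj]
      rw [h1, rename_C, sub_self]
      exact Ideal.zero_mem _
  | add p q hp hq =>
      have : (p + q) - rename some ((sepProj k v) (p + q)) =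
          (p - rename some ((sepProj k v) p)) +
          (q - rename some ((sepProj k v) q)) := by
        rw [map_add, map_add]; ring
      rw [this]; exact Ideal.add_mem _ hp hq
  | mul_X p i hp =>
      cases i with
      | some w =>
          have hx : rename some ((sepProj k v)
              (X (some w) : MvPolynomial (Option V) k)) = X (some w) := by simp [sepProj]
          have : p * X (some w) -
              rename some ((sepProj k v) (p * X (some w))) =
              (p - rename some ((sepProj k v) p)) * X (some w) := by
            rw [map_mul, map_mul, hx]; ring
          rw [this]; exact Ideal.mul_mem_right _ _ hp
      | none =>
          have hx : rename some ((sepProj k v)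
              (X none : MvPolynomial (Option V) k)) = X (some v) := by simp [sepProj]
          have : p * X none -
              rename some ((sepProj k v) (p * X none)) =
              (p - rename some ((sepProj k v) p)) * X none +
              rename some ((sepProj k v) p) *
                (X none - X (some v)) := by
            rw [map_mul, map_mul, hx]; ring
          rw [this]
          exact Ideal.add_mem _ (Ideal.mul_mem_right _ _ hp)
            (Ideal.mul_mem_left _ _ (Ideal.mem_span_singleton_self _))


set_option maxHeartbeats 1000000 in
set_option synthInstance.maxHeartbeats 400000 in
/-- Let `J ⊆ S = R[y]` be a separation of the edge ideal `I = I(G)` at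
the variable `x_v`, and let `Ĩ` be the image of `J` under the automorphism of `S` sending
`y ↦ x_v + y`.  Then `S/Ĩ` is flat over `k[y]`, and `(S/Ĩ)/(y·(S/Ĩ))` is isomorphic to
`R/I` as an `R`-algebra: every separation of `I` is a flat deformation of `R/I` over the
polynomial ring `k[y]`. -/
theorem statement1 {k : Type*} [Field k] {V : Type*} [Fintype V] [DecidableEq V]
    (E : V → V → Prop) (hsymm : Symmetric E) (v : V)
    (J : Ideal (MvPolynomial (Option V) k)) (hJ : IsSeparationAt k E v J)
    (Itld : Ideal (MvPolynomial (Option V) k))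
    (hItld : Itld = Ideal.map
      (aeval (fun o => Option.elim o (X (some v) + X none) (fun w => X (some w))) :
        MvPolynomial (Option V) k →ₐ[k] MvPolynomial (Option V) k) J) :
    letI : Algebra (Polynomial k) (MvPolynomial (Option V) k ⧸ Itld) :=
      ((Ideal.Quotient.mkₐ k Itld).comp
        (Polynomial.aeval (X none : MvPolynomial (Option V) k))).toRingHom.toAlgebra
    letI : Algebra (MvPolynomial V k) (MvPolynomial (Option V) k) :=
      (MvPolynomial.rename (some : V → Option V) :
        MvPolynomial V k →ₐ[k] MvPolynomial (Option V) k).toRingHom.toAlgebra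
    Module.Flat (Polynomial k) (MvPolynomial (Option V) k ⧸ Itld) ∧
    Nonempty
      (((MvPolynomial (Option V) k ⧸ Itld) ⧸
          Ideal.span {Ideal.Quotient.mk Itld (X none)}) ≃ₐ[MvPolynomial V k]
        (MvPolynomial V k ⧸ edgeIdeal k E)) := by

  classical
  subst hItld
  obtain ⟨hJmon, hJmap, -, -, hJreg⟩ := hJ
  set σa : MvPolynomial (Option V) k →ₐ[k] MvPolynomial (Option V) k :=
    aeval (fun o => Option.elim o (X (some v) + X none) (fun w => X (some w))) with hσa
  set τa : MvPolynomial (Option V) k →ₐ[k] MvPolynomial (Option V) k :=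
    aeval (fun o => Option.elim o (X none - X (some v)) (fun w => X (some w))) with hτa
  letI : Algebra (Polynomial k) (MvPolynomial (Option V) k ⧸ Ideal.map σa J) :=
    ((Ideal.Quotient.mkₐ k (Ideal.map σa J)).comp
      (Polynomial.aeval (X none : MvPolynomial (Option V) k))).toRingHom.toAlgebra
  letI : Algebra (MvPolynomial V k) (MvPolynomial (Option V) k) :=
    (MvPolynomial.rename (some : V → Option V) :
      MvPolynomial V k →ₐ[k] MvPolynomial (Option V) k).toRingHom.toAlgebra
  have hτσ : ∀ x, τa (σa x) = x := by
    intro x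
    have hcomp : τa.comp σa = AlgHom.id k (MvPolynomial (Option V) k) := by
      apply MvPolynomial.algHom_ext
      intro i
      cases i with
      | none => simp [hσa, hτa]
      | some w => simp [hσa, hτa]
    simpa using AlgHom.congr_fun hcomp x
  have hστ : ∀ x, σa (τa x) = x := by
    intro x
    have hcomp : σa.comp τa = AlgHom.id k (MvPolynomial (Option V) k) := by
      apply MvPolynomial.algHom_ext
      intro i
      cases i with
      | none => simp [hσa, hτa]
      | some w => simp [hσa, hτa]
    simpa using AlgHom.congr_fun hcomp x
  have hσsurj : Function.Surjective ⇑σa := fun x => ⟨τa x, hστ x⟩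
  have hmemI : ∀ f, f ∈ Ideal.map σa J ↔ τa f ∈ J := by
    intro f
    constructor
    · intro hf
      obtain ⟨g, hg, rfl⟩ := (Ideal.mem_map_iff_of_surjective σa hσsurj).mp hf
      rw [hτσ]
      exact hg
    · intro hf
      have : σa (τa f) = f := hστ f
      rw [← this]
      exact Ideal.mem_map_of_mem σa hf
  obtain ⟨A, hA⟩ := hJmon
  have hτn : τa (X none : MvPolynomial (Option V) k) = X none - X (some v) := by
    simp [hτa]
  have hct : ∀ p : Polynomial k,
      constantCoeff (Polynomial.aeval (X none - X (some v) : MvPolynomial (Option V) k) p)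
        = p.coeff 0 := by
    intro p
    rw [Polynomial.aeval_def, Polynomial.hom_eval₂]
    have h0 : constantCoeff (X none - X (some v) : MvPolynomial (Option V) k) = 0 := by simp
    rw [h0, Polynomial.eval₂_at_zero]
    simp
  have hkey : ∀ (n : ℕ) (p : Polynomial k), p.natDegree ≤ n → p ≠ 0 →
      ∀ g, Polynomial.aeval (X none - X (some v) : MvPolynomial (Option V) k) p * g ∈ J →
      g ∈ J := by
    intro n
    induction n with
    | zero =>
        intro p hdeg hp g hg
        have hc : constantCoeff
            (Polynomial.aeval (X none - X (some v) : MvPolynomial (Option V) k) p) ≠ 0 := by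
          rw [hct p]
          intro h0
          apply hp
          have h1 := Polynomial.eq_C_of_natDegree_eq_zero (Nat.le_zero.mp hdeg)
          rw [h1, h0, map_zero]
        rw [hA] at hg ⊢
        exact monomial_span_regular A _ g hc hg
    | succ n IH =>
        intro p hdeg hp g hg
        by_cases h0 : p.coeff 0 = 0
        · have hdiv : Polynomial.X * p.divX = p := by
            have h1 := Polynomial.X_mul_divX_add p
            rwa [h0, map_zero, add_zero] at h1
          have hdx : p.divX ≠ 0 := by
            intro hz; rw [hz, mul_zero] at hdiv; exact hp hdiv.symm
          have hdeg' : p.divX.natDegree ≤ n := by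
            have h2 := Polynomial.natDegree_divX_eq_natDegree_tsub_one (p := p)
            omega
          apply IH p.divX hdeg' hdx g
          apply hJreg
          have heq2 : Polynomial.aeval (X none - X (some v) : MvPolynomial (Option V) k) p
              = (X none - X (some v)) *
                Polynomial.aeval (X none - X (some v) : MvPolynomial (Option V) k) p.divX := by
            conv_lhs => rw [← hdiv]
            rw [map_mul, Polynomial.aeval_X]
          rw [← mul_assoc, ← heq2]
          exact hg
        · have hc : constantCoeff
              (Polynomial.aeval (X none - X (some v) : MvPolynomial (Option V) k) p) ≠ 0 := by
            rw [hct p]; exact h0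
          rw [hA] at hg ⊢
          exact monomial_span_regular A _ g hc hg
  -- flatness
  have hflat : Module.Flat (Polynomial k) (MvPolynomial (Option V) k ⧸ Ideal.map σa J) := by
    apply flat_of_torsionfree
    intro a m ha hm
    obtain ⟨f, rfl⟩ := Ideal.Quotient.mk_surjective m
    have hsm : a • (Ideal.Quotient.mk (Ideal.map σa J) f) =
        Ideal.Quotient.mk (Ideal.map σa J)
          (Polynomial.aeval (X none : MvPolynomial (Option V) k) a * f) := by
      rw [Algebra.smul_def]
      rw [show (algebraMap (Polynomial k) (MvPolynomial (Option V) k ⧸ Ideal.map σa J)) a =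
        Ideal.Quotient.mk (Ideal.map σa J)
          (Polynomial.aeval (X none : MvPolynomial (Option V) k) a) from rfl, ← map_mul]
    rw [hsm] at hm
    have hmem := Ideal.Quotient.eq_zero_iff_mem.mp hm
    have hτmul : τa (Polynomial.aeval (X none : MvPolynomial (Option V) k) a * f)
        = Polynomial.aeval (X none - X (some v) : MvPolynomial (Option V) k) a * τa f := by
      rw [map_mul]
      congr 1
      rw [← Polynomial.aeval_algHom_apply τa (X none) a, hτn]
    have hin : τa f ∈ J := by
      apply hkey a.natDegree a le_rfl ha (τa f)
      rw [← hτmul]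
      exact (hmemI _).mp hmem
    exact Ideal.Quotient.eq_zero_iff_mem.mpr ((hmemI f).mpr hin)
  -- the algebra isomorphism
  have hsepren : ∀ r : MvPolynomial V k, sepProj k v (rename some r) = r := by
    intro r
    show (aeval (fun o => Option.elim o (X v) X)) ((rename some) r) = r
    rw [aeval_rename]
    have hcomp : ((fun o => Option.elim o (X v) X) ∘ some) = (X : V → MvPolynomial V k) := rfl
    rw [hcomp, aeval_X_left_apply]
  have hsepsurj : Function.Surjective ⇑(sepProj k v) := fun r => ⟨rename some r, hsepren r⟩
  have hτren : ∀ r : MvPolynomial V k, τa (rename some r) = rename some r := by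
    intro r
    rw [hτa, aeval_rename]
    have hEQ : (aeval (fun w => (X (some w) : MvPolynomial (Option V) k)) :
        MvPolynomial V k →ₐ[k] MvPolynomial (Option V) k) = rename some := by
      apply MvPolynomial.algHom_ext
      intro w
      simp
    have hcomp : ((fun o => Option.elim o (X none - X (some v))
        (fun w => (X (some w) : MvPolynomial (Option V) k))) ∘ some)
        = fun w => (X (some w) : MvPolynomial (Option V) k) := rfl
    rw [hcomp]
    exact AlgHom.congr_fun hEQ r
  have hρren : ∀ r : MvPolynomial V k, sepProj k v (τa (rename some r)) = r := by
    intro r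
    rw [hτren, hsepren]
  set F : MvPolynomial (Option V) k →+* (MvPolynomial V k ⧸ edgeIdeal k E) :=
    (Ideal.Quotient.mk (edgeIdeal k E)).comp ((sepProj k v).comp τa).toRingHom with hFdef
  have hF : ∀ x, F x = Ideal.Quotient.mk (edgeIdeal k E) (sepProj k v (τa x)) := fun _ => rfl
  have hFsurj : Function.Surjective ⇑F := by
    intro x
    obtain ⟨r, rfl⟩ := Ideal.Quotient.mk_surjective x
    exact ⟨rename some r, by rw [hF, hρren]⟩
  have hker : RingHom.ker F = Ideal.map σa J ⊔ Ideal.span {(X none : MvPolynomial (Option V) k)} := by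
    apply le_antisymm
    · intro f hf
      have h1 : sepProj k v (τa f) ∈ edgeIdeal k E := by
        have h2 := RingHom.mem_ker.mp hf
        rw [hF] at h2
        exact Ideal.Quotient.eq_zero_iff_mem.mp h2
      rw [← hJmap] at h1
      obtain ⟨g, hgJ, hgeq⟩ := (Ideal.mem_map_iff_of_surjective _ hsepsurj).mp h1
      have h0 : sepProj k v (τa f - g) = 0 := by rw [map_sub, hgeq, sub_self]
      have hmem2 := sub_rename_sep_mem v (τa f - g)
      rw [h0, map_zero, sub_zero] at hmem2
      obtain ⟨c, hc⟩ := Ideal.mem_span_singleton'.mp hmem2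
      have h1' : τa f = g + c * (X none - X (some v)) := by rw [hc]; ring
      have hσt : σa (X none - X (some v) : MvPolynomial (Option V) k) = X none := by
        rw [map_sub, hσa]
        simp
      have hff : f = σa g + σa c * X none := by
        have h2 : f = σa (τa f) := (hστ f).symm
        rw [h2, h1', map_add, map_mul, hσt]
      rw [hff]
      exact Submodule.add_mem_sup (Ideal.mem_map_of_mem _ hgJ)
        (Ideal.mul_mem_left _ _ (Ideal.mem_span_singleton_self _))
    · refine sup_le ?_ ?_
      · rw [Ideal.map_le_iff_le_comap]
        intro g hg
        rw [Ideal.mem_comap, RingHom.mem_ker, hF, hτσ, Ideal.Quotient.eq_zero_iff_mem, ← hJmap]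
        exact Ideal.mem_map_of_mem _ hg
      · rw [Ideal.span_le, Set.singleton_subset_iff]
        rw [SetLike.mem_coe, RingHom.mem_ker, hF, hτn, map_sub]
        have h3 : sepProj k v (X none : MvPolynomial (Option V) k) = X v := by
          simp [sepProj]
        have h4 : sepProj k v (X (some v) : MvPolynomial (Option V) k) = X v := by
          simp [sepProj]
        rw [h3, h4, sub_self, map_zero]
  have hspan : Ideal.span {Ideal.Quotient.mk (Ideal.map σa J) (X none)} =
      Ideal.map (Ideal.Quotient.mk (Ideal.map σa J))
        (Ideal.span {(X none : MvPolynomial (Option V) k)}) := by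
    rw [Ideal.map_span, Set.image_singleton]
  set e : ((MvPolynomial (Option V) k ⧸ Ideal.map σa J) ⧸
      Ideal.span {Ideal.Quotient.mk (Ideal.map σa J) (X none)}) ≃+*
      (MvPolynomial V k ⧸ edgeIdeal k E) :=
    (Ideal.quotEquivOfEq hspan).trans
      ((DoubleQuot.quotQuotEquivQuotSup (Ideal.map σa J)
          (Ideal.span {(X none : MvPolynomial (Option V) k)})).trans
        ((Ideal.quotEquivOfEq hker.symm).trans
          (RingHom.quotientKerEquivOfSurjective hFsurj))) with he
  have hemk : ∀ x : MvPolynomial (Option V) k,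
      e (Ideal.Quotient.mk _ (Ideal.Quotient.mk (Ideal.map σa J) x)) = F x := by
    intro x
    rw [he]
    simp only [RingEquiv.trans_apply]
    rw [Ideal.quotEquivOfEq_mk]
    rw [show (Ideal.Quotient.mk (Ideal.map (Ideal.Quotient.mk (Ideal.map σa J))
        (Ideal.span {(X none : MvPolynomial (Option V) k)})))
        ((Ideal.Quotient.mk (Ideal.map σa J)) x) =
        DoubleQuot.quotQuotMk (Ideal.map σa J)
          (Ideal.span {(X none : MvPolynomial (Option V) k)}) x from rfl]
    rw [DoubleQuot.quotQuotEquivQuotSup_quotQuotMk, Ideal.quotEquivOfEq_mk]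
    exact RingHom.kerLift_mk F x
  refine ⟨hflat, ⟨AlgEquiv.ofRingEquiv (f := e) ?_⟩⟩
  intro r
  rw [show (algebraMap (MvPolynomial V k) (MvPolynomial V k ⧸ edgeIdeal k E)) r =
      Ideal.Quotient.mk (edgeIdeal k E) r from rfl]
  rw [show (algebraMap (MvPolynomial V k) ((MvPolynomial (Option V) k ⧸ Ideal.map σa J) ⧸
      Ideal.span {Ideal.Quotient.mk (Ideal.map σa J) (X none)})) r =
      Ideal.Quotient.mk _ (Ideal.Quotient.mk (Ideal.map σa J) (rename some r)) from rfl]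
  rw [hemk, hF, hρren]

end
end

section
/- For every edge ab of G (possibly a = b) and every λ ∈ Λ_{ab}: (i) there exists an R-linear map φ^λ_{ab} : I → R/I with φ^λ_{ab}(x_a x_b) = λ mod I and φ^λ_{ab}(e) = 0 for every minimal monomial generator e ≠ x_a x_b of I (a type I map); and (ii) if φ^λ_{ab} ≠ 0 (equivalently λ ∉ I) then φ^λ_{ab} does not lie in the image of δ*, i.e. it is a nontrivial first order deformation. -/
open MvPolynomial

noncomputable section

section Aux

open Finsupp in
lemma xx_eq {k : Type*} [Field k] {V : Type*} (u v : V) :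
    (X u * X v : MvPolynomial V k)
      = monomial (Finsupp.single u 1 + Finsupp.single v 1) 1 := by
  have : (X u : MvPolynomial V k) = monomial (Finsupp.single u 1) 1 := rfl
  rw [this, show (X v : MvPolynomial V k) = monomial (Finsupp.single v 1) 1 from rfl,
    monomial_mul, one_mul]

lemma edgeIdeal_eq {k : Type*} [Field k] {V : Type*} (E : V → V → Prop) :
    edgeIdeal k E = Ideal.span ((fun s => monomial s (1 : k)) ''
      {s | ∃ u v, E u v ∧ s = Finsupp.single u 1 + Finsupp.single v 1}) := by
  unfold edgeIdeal
  congr 1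
  ext m
  constructor
  · rintro ⟨u, v, huv, rfl⟩
    exact ⟨_, ⟨u, v, huv, rfl⟩, (xx_eq u v).symm⟩
  · rintro ⟨s, ⟨u, v, huv, rfl⟩, rfl⟩
    exact ⟨u, v, huv, (xx_eq u v).symm⟩

lemma mem_edgeIdeal_iff {k : Type*} [Field k] {V : Type*} {E : V → V → Prop}
    {p : MvPolynomial V k} :
    p ∈ edgeIdeal k E ↔ ∀ m ∈ p.support, ∃ u v, E u v ∧
      Finsupp.single u 1 + Finsupp.single v 1 ≤ m := by
  rw [edgeIdeal_eq, mem_ideal_span_monomial_image]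
  constructor
  · intro h m hm
    obtain ⟨si, ⟨u, v, huv, rfl⟩, hle⟩ := h m hm
    exact ⟨u, v, huv, hle⟩
  · intro h m hm
    obtain ⟨u, v, huv, hle⟩ := h m hm
    exact ⟨_, ⟨u, v, huv, rfl⟩, hle⟩

lemma monomial_mem {k : Type*} [Field k] {V : Type*} {E : V → V → Prop} {t : V →₀ ℕ}
    {u v : V} (huv : E u v) (h : Finsupp.single u 1 + Finsupp.single v 1 ≤ t) (c : k) :
    monomial t c ∈ edgeIdeal k E := by
  have : monomial t c
      = monomial (t - (Finsupp.single u 1 + Finsupp.single v 1)) c * (X u * X v) := by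
    rw [xx_eq, monomial_mul, mul_one, tsub_add_cancel_of_le h]
  rw [this]
  exact Ideal.mul_mem_left _ _ (Ideal.subset_span ⟨u, v, huv, rfl⟩)

variable {V : Type*} [Fintype V] [DecidableEq V]

open scoped Classical in
lemma mem_nbhd {E : V → V → Prop} {v w : V} : w ∈ nbhd E v ↔ E v w := by
  simp [nbhd]

/-- `Λ` as a finset. -/
def Lf (E : V → V → Prop) (a b : V) : Finset V :=
  (nbhd E a).erase b ∪ (nbhd E b).erase a

lemma Lf_comm (E : V → V → Prop) (a b : V) : Lf E a b = Lf E b a :=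
  Finset.union_comm _ _

/-- The exponent of `λ`. -/
def elam (E : V → V → Prop) (a b : V) (c : V → V) : V →₀ ℕ :=
  ∑ t ∈ (Lf E a b).image c, Finsupp.single t 1

lemma elam_comm (E : V → V → Prop) (a b : V) (c : V → V) :
    elam E a b c = elam E b a c := by
  rw [elam, elam, Lf_comm]

lemma elam_apply (E : V → V → Prop) (a b : V) (c : V → V) (x : V) :
    elam E a b c x = if x ∈ (Lf E a b).image c then 1 else 0 := by
  rw [elam, Finsupp.finset_sum_apply]
  simp [Finsupp.single_apply]

lemma fromZ {E : V → V → Prop} {a b : V} {c : V → V}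
    (hc : ∀ g ∈ Lf E a b, c g ∈ nbhd E g \ {a, b})
    {z : V} (hz : z ∈ Lf E a b) {m : V →₀ ℕ} (hm : 1 ≤ m z) :
    ∃ x y, E x y ∧ Finsupp.single x 1 + Finsupp.single y 1 ≤ m + elam E a b c := by
  have h1 := hc z hz
  rw [Finset.mem_sdiff] at h1
  have hE : E z (c z) := mem_nbhd.mp h1.1
  refine ⟨z, c z, hE, add_le_add ?_ ?_⟩
  · exact Finsupp.single_le_iff.mpr hm
  · refine Finsupp.single_le_iff.mpr ?_
    rw [elam_apply, if_pos (Finset.mem_image.mpr ⟨z, hz, rfl⟩)]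

lemma core2 {E : V → V → Prop} {a b v : V} {c : V → V}
    (hc : ∀ g ∈ Lf E a b, c g ∈ nbhd E g \ {a, b})
    (hav : E a v) {m w : V →₀ ℕ}
    (h1 : Finsupp.single a 1 + Finsupp.single v 1 ≤ w)
    (h2 : w ≤ m + (Finsupp.single a 1 + Finsupp.single b 1))
    (h3 : ¬ Finsupp.single a 1 + Finsupp.single b 1 ≤ w) :
    ∃ x y, E x y ∧ Finsupp.single x 1 + Finsupp.single y 1 ≤ m + elam E a b c := by
  by_cases hvb : v = b
  · exact absurd (hvb ▸ h1) h3
  by_cases hva : v = a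
  · subst hva
    -- loop at v; hvb : v ≠ b
    have ha1 : 2 ≤ w v := by
      have h4 := Finsupp.le_def.mp h1 v
      simpa [Finsupp.single_apply] using h4
    have ha2 : w v ≤ m v + 1 := by
      have h5 := Finsupp.le_def.mp h2 v
      simpa [Finsupp.single_apply, Ne.symm hvb] using h5
    have hz : v ∈ Lf E v b :=
      Finset.mem_union_left _ (Finset.mem_erase.mpr ⟨hvb, mem_nbhd.mpr hav⟩)
    exact fromZ hc hz (show 1 ≤ m v by omega)
  · have hv1 : 1 ≤ w v := by
      have h4 : Finsupp.single v 1 ≤ w := le_trans le_add_self h1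
      exact Finsupp.single_le_iff.mp h4
    have hv2 : w v ≤ m v := by
      have h5 := Finsupp.le_def.mp h2 v
      simpa [Finsupp.single_apply, Ne.symm hva, Ne.symm hvb] using h5
    have hz : v ∈ Lf E a b :=
      Finset.mem_union_left _ (Finset.mem_erase.mpr ⟨hvb, mem_nbhd.mpr hav⟩)
    exact fromZ hc hz (show 1 ≤ m v by omega)

lemma lemB {E : V → V → Prop} (hsymm : Symmetric E) {a b u v : V} {c : V → V}
    (hc : ∀ g ∈ Lf E a b, c g ∈ nbhd E g \ {a, b})
    (huv : E u v) {m w : V →₀ ℕ}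
    (h1 : Finsupp.single u 1 + Finsupp.single v 1 ≤ w)
    (h2 : w ≤ m + (Finsupp.single a 1 + Finsupp.single b 1))
    (h3 : ¬ Finsupp.single a 1 + Finsupp.single b 1 ≤ w) :
    ∃ x y, E x y ∧ Finsupp.single x 1 + Finsupp.single y 1 ≤ m + elam E a b c := by
  have hc' : ∀ g ∈ Lf E b a, c g ∈ nbhd E g \ {b, a} := by
    intro g hg
    rw [Lf_comm] at hg
    rw [Finset.pair_comm]
    exact hc g hg
  have h2' : w ≤ m + (Finsupp.single b 1 + Finsupp.single a 1) := by
    rwa [add_comm (Finsupp.single b 1)]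
  have h3' : ¬ Finsupp.single b 1 + Finsupp.single a 1 ≤ w := by
    rwa [add_comm (Finsupp.single b 1)]
  by_cases hua : u = a
  · subst hua; exact core2 hc huv h1 h2 h3
  by_cases hub : u = b
  · subst hub
    rw [elam_comm]
    exact core2 hc' huv h1 h2' h3'
  by_cases hva : v = a
  · subst hva
    exact core2 hc (hsymm huv) (by rwa [add_comm]) h2 h3
  by_cases hvb : v = b
  · subst hvb
    rw [elam_comm]
    exact core2 hc' (hsymm huv) (by rwa [add_comm]) h2' h3'
  · refine ⟨u, v, huv, le_trans ?_ (self_le_add_right m _)⟩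
    rw [Finsupp.le_def]
    intro x
    by_cases hxa : x = a
    · subst hxa
      simp [Finsupp.single_apply, hua, hva]
    by_cases hxb : x = b
    · subst hxb
      simp [Finsupp.single_apply, hub, hvb]
    · have hε : Finsupp.single a (1:ℕ) x + Finsupp.single b 1 x = 0 := by
        simp [Finsupp.single_apply, Ne.symm hxa, Ne.symm hxb]
      have hx := le_trans (Finsupp.le_def.mp h1 x) (Finsupp.le_def.mp h2 x)
      simp only [Finsupp.add_apply] at hx ⊢
      omega

lemma divMonomial_eq_zero {k : Type*} [Field k] {s e : V →₀ ℕ} (h : ¬ e ≤ s) :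
    (monomial s (1 : k)).divMonomial e = 0 := by
  ext t
  rw [coeff_divMonomial, coeff_monomial, coeff_zero, if_neg]
  rintro rfl
  exact h (self_le_add_right e t)

lemma mul_mem_of_support {k : Type*} [Field k] {E : V → V → Prop} {e : V →₀ ℕ}
    {D : MvPolynomial V k}
    (h : ∀ m ∈ D.support, ∃ x y, E x y ∧
      Finsupp.single x 1 + Finsupp.single y 1 ≤ e + m) :
    monomial e (1 : k) * D ∈ edgeIdeal k E := by
  rw [mem_edgeIdeal_iff]
  intro t ht
  rw [MvPolynomial.mem_support_iff, coeff_monomial_mul'] at ht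
  split_ifs at ht with hle
  · obtain ⟨x, y, hxy, hle'⟩ := h (t - e) (MvPolynomial.mem_support_iff.mpr (by
      intro h0; rw [h0, mul_zero] at ht; exact ht rfl))
    refine ⟨x, y, hxy, ?_⟩
    rwa [add_tsub_cancel_of_le hle] at hle'
  · exact absurd rfl ht

lemma lemA {k : Type*} [Field k] {E : V → V → Prop} (hsymm : Symmetric E) {a b : V}
    {c : V → V} (hc : ∀ g ∈ Lf E a b, c g ∈ nbhd E g \ {a, b})
    {p : MvPolynomial V k} (hp : p ∈ edgeIdeal k E) (r : MvPolynomial V k) :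
    monomial (elam E a b c) (1 : k) *
      ((r * p).divMonomial (Finsupp.single a 1 + Finsupp.single b 1)
        - r * (p.divMonomial (Finsupp.single a 1 + Finsupp.single b 1)))
      ∈ edgeIdeal k E := by
  set ε := Finsupp.single a 1 + Finsupp.single b (1:ℕ) with hε
  revert r
  refine Submodule.span_induction (p := fun x _ => ∀ r : MvPolynomial V k,
    monomial (elam E a b c) (1 : k) *
      ((r * x).divMonomial ε - r * (x.divMonomial ε)) ∈ edgeIdeal k E)
    ?_ ?_ ?_ ?_ hp
  · rintro x ⟨u, v, huv, rfl⟩ r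
    rw [xx_eq]
    by_cases hle : ε ≤ Finsupp.single u 1 + Finsupp.single v 1
    · obtain ⟨t, ht⟩ := exists_add_of_le hle
      rw [ht, show monomial (ε + t) (1:k) = monomial t 1 * monomial ε 1 by
        rw [monomial_mul, mul_one, add_comm], ← mul_assoc,
        divMonomial_mul_monomial, divMonomial_mul_monomial, sub_self, mul_zero]
      exact Ideal.zero_mem _
    · rw [divMonomial_eq_zero hle, mul_zero, sub_zero]
      apply mul_mem_of_support
      intro m hm
      rw [MvPolynomial.mem_support_iff, coeff_divMonomial, coeff_mul_monomial'] at hm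
      split_ifs at hm with h'
      · obtain ⟨x, y, hxy, hle'⟩ := lemB (m := m) hsymm hc huv le_rfl
          (show _ ≤ m + ε by rwa [add_comm ε m] at h') hle
        exact ⟨x, y, hxy, by rwa [add_comm (elam E a b c) m]⟩
      · exact absurd rfl hm
  · intro r
    simp
  · intro x y hx hy ihx ihy r
    have key : (r * (x + y)).divMonomial ε - r * ((x + y).divMonomial ε)
        = ((r * x).divMonomial ε - r * (x.divMonomial ε))
          + ((r * y).divMonomial ε - r * (y.divMonomial ε)) := by
      rw [mul_add, add_divMonomial, add_divMonomial, mul_add]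
      ring
    rw [key, mul_add]
    exact Ideal.add_mem _ (ihx r) (ihy r)
  · intro r' x hx ih r
    have key : (r * (r' • x)).divMonomial ε - r * ((r' • x).divMonomial ε)
        = (((r * r') * x).divMonomial ε - (r * r') * (x.divMonomial ε))
          - r * (((r' * x).divMonomial ε) - r' * (x.divMonomial ε)) := by
      rw [smul_eq_mul, ← mul_assoc]
      ring
    rw [key, mul_sub, mul_left_comm]
    exact Ideal.sub_mem _ (ih (r * r')) (Ideal.mul_mem_left _ r (ih r'))

lemma prod_X_eq {k : Type*} [Field k] {T : Finset V} :
    (∏ v ∈ T, (X v : MvPolynomial V k))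
      = monomial (∑ v ∈ T, Finsupp.single v 1) 1 := by
  induction T using Finset.induction with
  | empty => simp
  | insert _ _ h ih =>
    rw [Finset.prod_insert h, Finset.sum_insert h, ih,
      show (X _ : MvPolynomial V k) = monomial (Finsupp.single _ 1) 1 from rfl,
      monomial_mul, one_mul]

lemma my_degree_add {V : Type*} (f g : V →₀ ℕ) :
    Finsupp.degree (f + g) = Finsupp.degree f + Finsupp.degree g := by
  simp only [Finsupp.degree_eq_weight_one, map_add]

lemma my_degree_single {V : Type*} (x : V) :
    Finsupp.degree (Finsupp.single x (1 : ℕ)) = 1 := by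
  classical
  simp [Finsupp.degree_apply, Finsupp.support_single_ne_zero x (one_ne_zero)]

end Aux

/-- For every edge `ab` of `G` (possibly `a = b`) and every `λ ∈ Λ_{ab}`:
(i) there exists a type I map `φ^λ_{ab} : I → R/I`; and (ii) any such map, if nonzero,
does not lie in the image of `δ*`, i.e. it is a nontrivial first order deformation. -/
theorem statement2 {k : Type*} [Field k] {V : Type*} [Fintype V] [DecidableEq V]
    (E : V → V → Prop) (hsymm : Symmetric E)
    (a b : V) (hab : E a b) (lam : MvPolynomial V k) (hlam : lam ∈ LambdaSet k E a b) :
    (∃ φ : edgeIdeal k E →ₗ[MvPolynomial V k] MvPolynomial V k ⧸ edgeIdeal k E,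
      IsTypeI k E a b hab lam φ) ∧
    ∀ φ : edgeIdeal k E →ₗ[MvPolynomial V k] MvPolynomial V k ⧸ edgeIdeal k E,
      IsTypeI k E a b hab lam φ → φ ≠ 0 → ¬ IsTrivialDef k E φ := by
  obtain ⟨c, hc, rfl⟩ := hlam
  have hlam_eq : (∏ v ∈ ((nbhd E a).erase b ∪ (nbhd E b).erase a).image c,
      (X v : MvPolynomial V k)) = monomial (elam E a b c) 1 := prod_X_eq
  rw [hlam_eq]
  have hcL : ∀ g ∈ Lf E a b, c g ∈ nbhd E g \ {a, b} := hc
  set ε : V →₀ ℕ := Finsupp.single a 1 + Finsupp.single b 1 with hεdef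
  constructor
  · refine ⟨{
      toFun := fun p => Ideal.Quotient.mk (edgeIdeal k E)
        (monomial (elam E a b c) 1 * ((p : MvPolynomial V k).divMonomial ε)),
      map_add' := fun p q => by
        simp only [Submodule.coe_add, add_divMonomial, mul_add]
        exact RingHom.map_add _ _ _,
      map_smul' := fun r p => by
        simp only [SetLike.val_smul, smul_eq_mul, RingHom.id_apply]
        rw [← Ideal.Quotient.mk_eq_mk, ← Ideal.Quotient.mk_eq_mk,
          ← Submodule.Quotient.mk_smul, smul_eq_mul, Submodule.Quotient.eq]
        have heq : monomial (elam E a b c) 1 * ((r * (p : MvPolynomial V k)).divMonomial ε)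
            - r * (monomial (elam E a b c) 1 * ((p : MvPolynomial V k).divMonomial ε))
            = monomial (elam E a b c) 1 *
              ((r * (p : MvPolynomial V k)).divMonomial ε
                - r * ((p : MvPolynomial V k).divMonomial ε)) := by ring
        rw [heq]
        exact lemA hsymm hcL p.2 r }, ?_, ?_⟩
    · show Ideal.Quotient.mk (edgeIdeal k E)
        (monomial (elam E a b c) 1 * ((X a * X b : MvPolynomial V k).divMonomial ε)) = _
      rw [xx_eq, ← hεdef, divMonomial_monomial, mul_one]
    · intro u v h hne
      show Ideal.Quotient.mk (edgeIdeal k E)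
        (monomial (elam E a b c) 1 * ((X u * X v : MvPolynomial V k).divMonomial ε)) = 0
      rw [xx_eq]
      by_cases hle : ε ≤ Finsupp.single u 1 + Finsupp.single v 1
      · exfalso
        obtain ⟨t, ht⟩ := exists_add_of_le hle
        have hdeg := congrArg Finsupp.degree ht
        rw [hεdef] at hdeg
        simp only [my_degree_add, my_degree_single] at hdeg
        have ht0 : t = 0 := (Finsupp.degree_eq_zero_iff t).mp (by omega)
        apply hne
        rw [xx_eq, xx_eq a b, ht, ht0, add_zero, hεdef]
      · rw [divMonomial_eq_zero hle, mul_zero, map_zero]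
  · intro ψ hψ hψne htriv
    have hlamI : monomial (elam E a b c) (1:k) ∉ edgeIdeal k E := by
      intro hmem
      apply hψne
      apply LinearMap.ext
      rintro ⟨x, hx⟩
      rw [LinearMap.zero_apply]
      have h0 : ∀ y, y ∈ Ideal.span {m : MvPolynomial V k | ∃ u v, E u v ∧ m = X u * X v} →
          ∀ (hy' : y ∈ edgeIdeal k E), ψ ⟨y, hy'⟩ = 0 := by
        intro y hy
        induction hy using Submodule.span_induction with
        | mem z hz =>
          intro hy'
          obtain ⟨u, v, huv, rfl⟩ := hz
          by_cases hxe : (X u * X v : MvPolynomial V k) = X a * X b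
          · have heq : (⟨X u * X v, hy'⟩ : edgeIdeal k E) = edgeGen k E a b hab :=
              Subtype.ext hxe
            rw [heq, hψ.1, Ideal.Quotient.eq_zero_iff_mem]
            exact hmem
          · have heq : (⟨X u * X v, hy'⟩ : edgeIdeal k E) = edgeGen k E u v huv := rfl
            rw [heq]
            exact hψ.2 u v huv hxe
        | zero =>
          intro hy'
          have hz0 : (⟨0, hy'⟩ : edgeIdeal k E) = 0 := rfl
          rw [hz0, map_zero]
        | add y z hy hz ihy ihz =>
          intro hy'
          have hza : (⟨y + z, hy'⟩ : edgeIdeal k E) = ⟨y, hy⟩ + ⟨z, hz⟩ := rfl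
          rw [hza, map_add, ihy hy, ihz hz, add_zero]
        | smul r y hy ihy =>
          intro hy'
          have hzs : (⟨r • y, hy'⟩ : edgeIdeal k E) = r • ⟨y, hy⟩ := rfl
          rw [hzs, map_smul, ihy hy, smul_zero]
      exact h0 x hx hx
    obtain ⟨d, hd⟩ := htriv
    have h1 := hψ.1.symm.trans (hd (edgeGen k E a b hab))
    have hval : ((edgeGen k E a b hab : edgeIdeal k E) : MvPolynomial V k)
        = X a * X b := rfl
    rw [hval] at h1
    have hleib : d ((X a : MvPolynomial V k) * X b)
        = X a * d (X b) + X b * d (X a) := by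
      rw [Derivation.leibniz, smul_eq_mul, smul_eq_mul]
    rw [hleib] at h1
    have hsub : monomial (elam E a b c) (1:k) - (X a * d (X b) + X b * d (X a))
        ∈ edgeIdeal k E := Ideal.Quotient.eq.mp h1
    have hea : elam E a b c a = 0 := by
      have hni : a ∉ (Lf E a b).image c := by
        intro hmem'
        obtain ⟨g, hg, hga⟩ := Finset.mem_image.mp hmem'
        have h2 := hcL g hg
        rw [Finset.mem_sdiff] at h2
        exact h2.2 (by rw [hga]; exact Finset.mem_insert_self a {b})
      rw [elam_apply, if_neg hni]
    have heb : elam E a b c b = 0 := by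
      have hni : b ∉ (Lf E a b).image c := by
        intro hmem'
        obtain ⟨g, hg, hgb⟩ := Finset.mem_image.mp hmem'
        have h2 := hcL g hg
        rw [Finset.mem_sdiff] at h2
        exact h2.2 (by rw [hgb]; exact Finset.mem_insert_of_mem (Finset.mem_singleton_self b))
      rw [elam_apply, if_neg hni]
    have hco : coeff (elam E a b c) (monomial (elam E a b c) (1:k)
        - (X a * d (X b) + X b * d (X a))) = 1 := by
      simp [coeff_X_mul', Finsupp.mem_support_iff, hea, heb]
    have hmem2 : elam E a b c ∈ (monomial (elam E a b c) (1:k)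
        - (X a * d (X b) + X b * d (X a))).support :=
      MvPolynomial.mem_support_iff.mpr (by rw [hco]; exact one_ne_zero)
    obtain ⟨x, y, hxy, hle⟩ := mem_edgeIdeal_iff.mp hsub _ hmem2
    exact hlamI (monomial_mem hxy hle 1)

end
end

section
/- For every vertex a of G, every nonempty subset L of the vertex set of N̄(a), and every λ ∈ Γ_{a,L}, there exists an R-linear map φ^λ_{a,L} : I → R/I with φ^λ_{a,L}(x_a x_u) = λ·x_u mod I for every u ∈ L and φ^λ_{a,L}(e) = 0 for every other minimal monomial generator e of I (a type II map). -/
open MvPolynomial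

noncomputable section

namespace Statement3Aux

variable {k : Type*} [Field k] {V : Type*} [Fintype V] [DecidableEq V]

lemma mem_nbhd (E : V → V → Prop) (v w : V) : w ∈ nbhd E v ↔ E v w := by
  classical
  simp [nbhd]

lemma X_mul_X (p q : V) : (X p * X q : MvPolynomial V k) =
    monomial (Finsupp.single p 1 + Finsupp.single q 1) 1 := by
  rw [MvPolynomial.X, MvPolynomial.X, monomial_mul, one_mul]

lemma monomial_mem_edgeIdeal (E : V → V → Prop) {p q : V} (h : E p q) {d : V →₀ ℕ}
    (hle : Finsupp.single p 1 + Finsupp.single q 1 ≤ d) (c : k) :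
    (monomial d c : MvPolynomial V k) ∈ edgeIdeal k E := by
  have hd : (Finsupp.single p 1 + Finsupp.single q 1)
      + (d - (Finsupp.single p 1 + Finsupp.single q 1)) = d := add_tsub_cancel_of_le hle
  have hmono : (monomial d c : MvPolynomial V k)
      = (X p * X q) * monomial (d - (Finsupp.single p 1 + Finsupp.single q 1)) c := by
    rw [X_mul_X, monomial_mul, one_mul, hd]
  rw [hmono]
  exact Ideal.mul_mem_right _ _ (Ideal.subset_span ⟨p, q, h, rfl⟩)

lemma prod_X_eq (T : Finset V) :
    (∏ v ∈ T, X v : MvPolynomial V k)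
      = monomial (∑ v ∈ T, Finsupp.single v 1) 1 := by
  classical
  induction T using Finset.induction_on with
  | empty => simp
  | insert _ _ h ih =>
      rw [Finset.prod_insert h, Finset.sum_insert h, ih, MvPolynomial.X, monomial_mul, one_mul]

lemma pair_le {x y : V} (hxy : x ≠ y) (m : V →₀ ℕ) (hx : 1 ≤ m x) (hy : 1 ≤ m y) :
    Finsupp.single x 1 + Finsupp.single y 1 ≤ m := by
  rw [Finsupp.le_def]
  intro v
  rw [Finsupp.add_apply, Finsupp.single_apply, Finsupp.single_apply]
  rcases eq_or_ne x v with rfl | h1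
  · rw [if_pos rfl, if_neg (Ne.symm hxy)]
    simpa using hx
  · rw [if_neg h1]
    rcases eq_or_ne y v with rfl | h2
    · rw [if_pos rfl]; simpa using hy
    · rw [if_neg h2]; exact Nat.zero_le _

section Main

variable (E : V → V → Prop) (a : V) (L : Finset V) (lam : MvPolynomial V k)

/-- The condition for a monomial exponent to be divisible by a generator `x_a x_u`, `u ∈ L`. -/
def Cond (d : V →₀ ℕ) : Prop :=
  ∃ u ∈ L, Finsupp.single a 1 + Finsupp.single u 1 ≤ d

open scoped Classical in
/-- The `k`-linear map `R → R/I` underlying the type II map. -/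
def Phi : MvPolynomial V k →ₗ[k] MvPolynomial V k ⧸ edgeIdeal k E :=
  (Finsupp.lsum k fun d : V →₀ ℕ =>
    if Cond a L d then
      LinearMap.toSpanSingleton k _
        (Ideal.Quotient.mk (edgeIdeal k E)
          (lam * monomial (d - Finsupp.single a 1) 1))
    else 0)
    ∘ₗ (AddMonoidAlgebra.coeffLinearEquiv k).toLinearMap

lemma smul_mk_k (c : k) (x : MvPolynomial V k) :
    c • Ideal.Quotient.mk (edgeIdeal k E) x
      = Ideal.Quotient.mk (edgeIdeal k E) (C c * x) := by
  rw [← MvPolynomial.smul_eq_C_mul, ← Ideal.Quotient.mk_eq_mk, ← Ideal.Quotient.mk_eq_mk,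
    Submodule.Quotient.mk_smul]

lemma smul_mk_R (r : MvPolynomial V k) (x : MvPolynomial V k ⧸ edgeIdeal k E) :
    r • x = Ideal.Quotient.mk (edgeIdeal k E) r * x := by
  obtain ⟨m, rfl⟩ := Ideal.Quotient.mk_surjective x
  rw [← map_mul, ← smul_eq_mul, ← Ideal.Quotient.mk_eq_mk, ← Ideal.Quotient.mk_eq_mk,
    Submodule.Quotient.mk_smul]

lemma Phi_monomial_pos {d : V →₀ ℕ} (h : Cond a L d) (c : k) :
    Phi E a L lam (monomial d c)
      = Ideal.Quotient.mk (edgeIdeal k E)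
          (C c * (lam * monomial (d - Finsupp.single a 1) 1)) := by
  classical
  rw [← single_eq_monomial]
  show Finsupp.lsum k _ (Finsupp.single d c) = _
  rw [Finsupp.lsum_single, if_pos h, LinearMap.toSpanSingleton_apply, smul_mk_k]

lemma Phi_monomial_neg {d : V →₀ ℕ} (h : ¬ Cond a L d) (c : k) :
    Phi E a L lam (monomial d c) = 0 := by
  classical
  rw [← single_eq_monomial]
  show Finsupp.lsum k _ (Finsupp.single d c) = _
  rw [Finsupp.lsum_single, if_neg h]
  rfl

variable {E a L lam}
variable (hsymm : Symmetric E) (hLsub : L ⊆ nbhd E a) (hlam : lam ∈ GammaSet k E a L)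

include hsymm hLsub hlam in
/-- The crucial membership fact: if a generator `x_p x_q` is not of the special form but the
product with a monomial is, then the would-be image lies in the edge ideal. -/
lemma key_mem (e : V →₀ ℕ) {p q : V} (hpq : E p q)
    (hcond : Cond a L (e + (Finsupp.single p 1 + Finsupp.single q 1)))
    (hncond : ¬ Cond a L (Finsupp.single p 1 + Finsupp.single q 1)) :
    lam * monomial (e + (Finsupp.single p 1 + Finsupp.single q 1) - Finsupp.single a 1) 1
      ∈ edgeIdeal k E := by
  classical
  obtain ⟨u, hu, hle⟩ := hcond
  set d0 : V →₀ ℕ := Finsupp.single p 1 + Finsupp.single q 1 with hd0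
  set D : V →₀ ℕ := e + d0 with hD
  set m' : V →₀ ℕ := D - Finsupp.single a 1 with hm'
  have hle' : ∀ v, (Finsupp.single a 1) v + (Finsupp.single u 1) v ≤ D v := by
    intro v
    rw [← Finsupp.add_apply]
    exact Finsupp.le_def.mp hle v
  have hm'app : ∀ v, m' v = D v - (Finsupp.single a 1) v := by
    intro v; rw [hm', Finsupp.tsub_apply]
  have hm'u : 1 ≤ m' u := by
    have h1 := hle' u
    rw [Finsupp.single_eq_same] at h1
    rw [hm'app]
    omega
  have hDd0 : ∀ v, d0 v ≤ D v := fun v => Finsupp.le_def.mp (le_add_self) v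
  by_cases hp : a = p
  · by_cases hq : a = q
    · -- loop at a
      subst hp; subst hq
      have hua : u ≠ a := by
        intro h; subst h
        exact hncond ⟨u, hu, le_refl _⟩
      have hEau : E a u := (mem_nbhd E a u).mp (hLsub hu)
      have hm'a : 1 ≤ m' a := by
        have h1 : d0 a = 2 := by
          rw [hd0, Finsupp.add_apply, Finsupp.single_eq_same]
        have h2 := hDd0 a
        rw [hm'app, Finsupp.single_eq_same]
        omega
      exact Ideal.mul_mem_left _ _
        (monomial_mem_edgeIdeal E hEau (pair_le (Ne.symm hua) m' hm'a hm'u) 1)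
    · -- p = a, q ≠ a : w := q
      subst hp
      have hEaw : E a q := hpq
      have hwL : q ∉ L := by
        intro hqL
        exact hncond ⟨q, hqL, le_refl _⟩
      have huw : u ≠ q := fun h => hwL (h ▸ hu)
      have hm'w : 1 ≤ m' q := by
        have h1 : 1 ≤ d0 q := by
          rw [hd0, Finsupp.add_apply, Finsupp.single_eq_same]
          omega
        have h2 := hDd0 q
        have h3 : (Finsupp.single a 1) q = 0 := Finsupp.single_eq_of_ne' hq
        rw [hm'app, h3]
        omega
      by_cases hEuw : E u q
      · exact Ideal.mul_mem_left _ _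
          (monomial_mem_edgeIdeal E hEuw (pair_le huw m' hm'u hm'w) 1)
      · -- q ∈ Γ(L), use the choice function
        have hqG : q ∈ GammaF E a L := by
          unfold GammaF
          rw [Finset.mem_filter, Finset.mem_sdiff, mem_nbhd]
          exact ⟨⟨hEaw, hwL⟩, u, hu, huw, hEuw⟩
        obtain ⟨c, hc, hlameq⟩ := hlam
        have hcq := hc q hqG
        rw [Finset.mem_erase, mem_nbhd] at hcq
        obtain ⟨hcqa, hEqcq⟩ := hcq
        have hcqT : c q ∈ (GammaF E a L).image c := Finset.mem_image_of_mem c hqG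
        set T := (GammaF E a L).image c with hT
        set lexp : V →₀ ℕ := ∑ v ∈ T, Finsupp.single v 1 with hlexp
        have hlam2 : lam = monomial lexp 1 := by rw [hlameq, prod_X_eq]
        have hlexpcq : 1 ≤ lexp (c q) := by
          rw [hlexp, Finsupp.finset_sum_apply]
          have : (Finsupp.single (c q) 1) (c q) ≤ ∑ v ∈ T, (Finsupp.single v 1) (c q) :=
            Finset.single_le_sum (f := fun v => (Finsupp.single v 1 : V →₀ ℕ) (c q))
              (fun i _ => Nat.zero_le _) hcqT
          rwa [Finsupp.single_eq_same] at this
        have hprod : lam * monomial m' 1 = monomial (lexp + m') (1 : k) := by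
          rw [hlam2, monomial_mul, one_mul]
        rw [hprod]
        refine monomial_mem_edgeIdeal E hEqcq ?_ 1
        have h1 : Finsupp.single q 1 ≤ m' := Finsupp.single_le_iff.mpr hm'w
        have h2 : Finsupp.single (c q) 1 ≤ lexp := Finsupp.single_le_iff.mpr hlexpcq
        calc Finsupp.single q 1 + Finsupp.single (c q) 1 ≤ m' + lexp := add_le_add h1 h2
          _ = lexp + m' := add_comm _ _
  · by_cases hq : a = q
    · -- q = a, p ≠ a : w := p, symmetric to previous case
      subst hq
      have hEaw : E a p := hsymm hpq
      have hd0' : d0 = Finsupp.single a 1 + Finsupp.single p 1 := by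
        rw [hd0, add_comm]
      have hwL : p ∉ L := by
        intro hpL
        exact hncond ⟨p, hpL, hd0' ▸ le_refl _⟩
      have huw : u ≠ p := fun h => hwL (h ▸ hu)
      have hm'w : 1 ≤ m' p := by
        have h1 : 1 ≤ d0 p := by
          rw [hd0, Finsupp.add_apply, Finsupp.single_eq_same]
          omega
        have h2 := hDd0 p
        have h3 : (Finsupp.single a 1) p = 0 := Finsupp.single_eq_of_ne' hp
        rw [hm'app, h3]
        omega
      by_cases hEuw : E u p
      · exact Ideal.mul_mem_left _ _
          (monomial_mem_edgeIdeal E hEuw (pair_le huw m' hm'u hm'w) 1)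
      · have hqG : p ∈ GammaF E a L := by
          unfold GammaF
          rw [Finset.mem_filter, Finset.mem_sdiff, mem_nbhd]
          exact ⟨⟨hEaw, hwL⟩, u, hu, huw, hEuw⟩
        obtain ⟨c, hc, hlameq⟩ := hlam
        have hcq := hc p hqG
        rw [Finset.mem_erase, mem_nbhd] at hcq
        obtain ⟨hcqa, hEqcq⟩ := hcq
        have hcqT : c p ∈ (GammaF E a L).image c := Finset.mem_image_of_mem c hqG
        set T := (GammaF E a L).image c with hT
        set lexp : V →₀ ℕ := ∑ v ∈ T, Finsupp.single v 1 with hlexp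
        have hlam2 : lam = monomial lexp 1 := by rw [hlameq, prod_X_eq]
        have hlexpcq : 1 ≤ lexp (c p) := by
          rw [hlexp, Finsupp.finset_sum_apply]
          have : (Finsupp.single (c p) 1) (c p) ≤ ∑ v ∈ T, (Finsupp.single v 1) (c p) :=
            Finset.single_le_sum (f := fun v => (Finsupp.single v 1 : V →₀ ℕ) (c p))
              (fun i _ => Nat.zero_le _) hcqT
          rwa [Finsupp.single_eq_same] at this
        have hprod : lam * monomial m' 1 = monomial (lexp + m') (1 : k) := by
          rw [hlam2, monomial_mul, one_mul]
        rw [hprod]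
        refine monomial_mem_edgeIdeal E hEqcq ?_ 1
        have h1 : Finsupp.single p 1 ≤ m' := Finsupp.single_le_iff.mpr hm'w
        have h2 : Finsupp.single (c p) 1 ≤ lexp := Finsupp.single_le_iff.mpr hlexpcq
        calc Finsupp.single p 1 + Finsupp.single (c p) 1 ≤ m' + lexp := add_le_add h1 h2
          _ = lexp + m' := add_comm _ _
    · -- p ≠ a, q ≠ a
      refine Ideal.mul_mem_left _ _ (monomial_mem_edgeIdeal E hpq ?_ 1)
      rw [Finsupp.le_def]
      intro v
      rcases eq_or_ne v a with rfl | hva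
      · have hz : d0 v = 0 := by
          rw [hd0, Finsupp.add_apply, Finsupp.single_eq_of_ne' (Ne.symm hp),
            Finsupp.single_eq_of_ne' (Ne.symm hq)]
          omega
        rw [← hd0, hz]
        exact Nat.zero_le _
      · have h3 : (Finsupp.single a 1) v = 0 := Finsupp.single_eq_of_ne' (Ne.symm hva)
        rw [← hd0, hm'app, h3]
        have := hDd0 v
        omega

include hsymm hLsub hlam in
lemma key0 (e : V →₀ ℕ) (c' : k) {p q : V} (hpq : E p q) :
    Phi E a L lam (monomial e c' * (X p * X q))
      = Ideal.Quotient.mk (edgeIdeal k E) (monomial e c') * Phi E a L lam (X p * X q) := by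
  classical
  set d0 : V →₀ ℕ := Finsupp.single p 1 + Finsupp.single q 1 with hd0
  have hXX : (X p * X q : MvPolynomial V k) = monomial d0 1 := X_mul_X p q
  have hmul : monomial e c' * (X p * X q) = (monomial (e + d0) c' : MvPolynomial V k) := by
    rw [hXX, monomial_mul, mul_one]
  by_cases h0 : Cond a L d0
  · obtain ⟨u, hu, hle⟩ := h0
    have ha1 : Finsupp.single a 1 ≤ d0 := le_trans le_self_add hle
    have hD : Cond a L (e + d0) := ⟨u, hu, le_trans hle le_add_self⟩
    rw [hmul, Phi_monomial_pos E a L lam hD, hXX, Phi_monomial_pos E a L lam ⟨u, hu, hle⟩,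
      ← map_mul]
    congr 1
    have hsub : e + d0 - Finsupp.single a 1 = e + (d0 - Finsupp.single a 1) :=
      add_tsub_assoc_of_le ha1 e
    rw [hsub]
    have hsplit : (monomial (e + (d0 - Finsupp.single a 1)) 1 : MvPolynomial V k)
        = monomial e 1 * monomial (d0 - Finsupp.single a 1) 1 := by
      rw [monomial_mul, one_mul]
    have hce : (monomial e c' : MvPolynomial V k) = C c' * monomial e 1 := by
      rw [C_mul_monomial, mul_one]
    rw [hsplit, hce, C_1]
    ring
  · rw [hmul, hXX, Phi_monomial_neg E a L lam h0, mul_zero]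
    by_cases hD : Cond a L (e + d0)
    · rw [Phi_monomial_pos E a L lam hD]
      rw [Ideal.Quotient.eq_zero_iff_mem]
      exact Ideal.mul_mem_left _ _ (key_mem hsymm hLsub hlam e hpq hD h0)
    · exact Phi_monomial_neg E a L lam hD c'

include hsymm hLsub hlam in
lemma key (f : MvPolynomial V k) (hf : f ∈ edgeIdeal k E) :
    ∀ r : MvPolynomial V k, Phi E a L lam (r * f)
      = Ideal.Quotient.mk (edgeIdeal k E) r * Phi E a L lam f := by
  refine Submodule.span_induction
    (p := fun f _ => ∀ r : MvPolynomial V k, Phi E a L lam (r * f)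
      = Ideal.Quotient.mk (edgeIdeal k E) r * Phi E a L lam f) ?_ ?_ ?_ ?_ hf
  · rintro x ⟨p, q, hpq, rfl⟩ r
    induction r using MvPolynomial.induction_on' with
    | monomial e c' => exact key0 hsymm hLsub hlam e c' hpq
    | add r1 r2 ih1 ih2 =>
        rw [add_mul, map_add (Phi E a L lam), ih1, ih2, RingHom.map_add, add_mul]
  · intro r
    simp
  · intro x y _ _ hx hy r
    rw [mul_add, map_add, hx, hy, map_add, mul_add]
  · intro s x _ hx r
    rw [smul_eq_mul, ← mul_assoc, hx (r * s), hx s, map_mul, mul_assoc]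

/-- Exponent sums: used to show degree-2 monomial divisibility forces equality. -/
lemma eq_of_le_of_two {x y u v : V}
    (h : Finsupp.single x 1 + Finsupp.single y 1
        ≤ Finsupp.single u 1 + Finsupp.single v 1) :
    Finsupp.single x 1 + Finsupp.single y 1
      = (Finsupp.single u 1 + Finsupp.single v 1 : V →₀ ℕ) := by
  classical
  set d : V →₀ ℕ := Finsupp.single x 1 + Finsupp.single y 1 with hd
  set d' : V →₀ ℕ := Finsupp.single u 1 + Finsupp.single v 1 with hd'
  have h1 : d + (d' - d) = d' := add_tsub_cancel_of_le h
  have hsum : ∀ w w' : V,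
      ((Finsupp.single w 1 + Finsupp.single w' 1 : V →₀ ℕ).sum fun _ n => n) = 2 := by
    intro w w'
    rw [Finsupp.sum_add_index' (fun _ => rfl) (fun _ _ _ => rfl),
      Finsupp.sum_single_index rfl, Finsupp.sum_single_index rfl]
  have h2 : ((d' - d).sum fun _ n => n) = 0 := by
    have h3 := Finsupp.sum_add_index' (f := d) (g := d' - d) (h := fun _ n => n)
      (fun _ => rfl) (fun _ _ _ => rfl)
    rw [h1] at h3
    have e1 : (d.sum fun _ n => n) = 2 := by rw [hd]; exact hsum x y
    have e2 : (d'.sum fun _ n => n) = 2 := by rw [hd']; exact hsum u v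
    omega
  have h4 : d' - d = 0 := by
    by_contra hne0
    have hne0' : (d' - d).support.Nonempty := Finsupp.support_nonempty_iff.mpr hne0
    obtain ⟨w, hw⟩ := hne0'
    have h5 := Finset.sum_eq_zero_iff.mp h2 w hw
    exact Finsupp.mem_support_iff.mp hw h5
  rw [← h1, h4, add_zero]

end Main

end Statement3Aux

/-- For every vertex `a`, every nonempty subset `L` of the vertex set of
`N̄(a)` (i.e. `L ⊆ N(a)`), and every `λ ∈ Γ_{a,L}`, there exists a type II map
`φ^λ_{a,L} : I → R/I`, sending `x_a x_u ↦ λ·x_u` for `u ∈ L` and every other minimal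
monomial generator of `I` to `0`. -/
theorem statement3 {k : Type*} [Field k] {V : Type*} [Fintype V] [DecidableEq V]
    (E : V → V → Prop) (hsymm : Symmetric E)
    (a : V) (L : Finset V) (hL : L.Nonempty) (hLsub : L ⊆ nbhd E a)
    (lam : MvPolynomial V k) (hlam : lam ∈ GammaSet k E a L) :
    ∃ φ : edgeIdeal k E →ₗ[MvPolynomial V k] MvPolynomial V k ⧸ edgeIdeal k E,
      IsTypeII k E a L lam φ := by
  classical
  open Statement3Aux in
  refine ⟨{ toFun := fun f => Phi E a L lam f.1
            map_add' := fun f g => by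
              show Phi E a L lam ((f : MvPolynomial V k) + g) = _
              rw [map_add]
            map_smul' := fun r f => by
              show Phi E a L lam (r * f.1) = _
              rw [key hsymm hLsub hlam f.1 f.2 r, RingHom.id_apply, smul_mk_R] }, ?_, ?_⟩
  · intro u hu h
    show Phi E a L lam (X a * X u) = _
    rw [X_mul_X, Phi_monomial_pos E a L lam ⟨u, hu, le_refl _⟩, add_tsub_cancel_left]
    congr 1
    rw [map_one, one_mul]
    rfl
  · intro u v h hne
    show Phi E a L lam (X u * X v) = 0
    rw [X_mul_X]
    refine Phi_monomial_neg E a L lam ?_ 1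
    rintro ⟨w, hw, hle⟩
    refine hne w hw ?_
    rw [X_mul_X, X_mul_X, eq_of_le_of_two hle]

end
end
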